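/- arXiv:2308.13054 — 9 statements merged into one kernel-verified Lean document; each statement's English description precedes it below -/
import Mathlib

section
/- Every directed acyclic graph on n vertices with positive edge weights admits a reweighting w_H of its edges (same vertex and edge set) such that (1) a path is a shortest path under w_H if and only if it is a shortest path under the original weights, and (2) the aspect ratio of w_H is at most n+1. -/
/-- The weight of a path (list of vertices): sum of weights of consecutive edges. -/
def pathWeight {V : Type} (w : V → V → ℝ) : List V → ℝ
  | [] => 0
  | [_] => 0
  | a :: b :: rest => w a b + pathWeight w (b :: rest)

/-- A nonempty list of vertices is a path if consecutive vertices are joined by edges. -/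
def IsPath {V : Type} (E : V → V → Prop) : List V → Prop
  | [] => False
  | [_] => True
  | a :: b :: rest => E a b ∧ IsPath E (b :: rest)

/-- `p` is a shortest path: it is a path, and no path with the same endpoints is shorter. -/
def IsShortestPath {V : Type} (E : V → V → Prop) (w : V → V → ℝ) (p : List V) : Prop :=
  IsPath E p ∧ ∀ q : List V, IsPath E q → q.head? = p.head? → q.getLast? = p.getLast? →
    pathWeight w p ≤ pathWeight w q

lemma pathWeight_shift {V : Type} (w : V → V → ℝ) (c : V → ℝ) :
    ∀ (p : List V) (a b : V), p.head? = some a → p.getLast? = some b →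
      pathWeight (fun i j => w i j + (c j - c i)) p = pathWeight w p + (c b - c a)
  | [], a, b, ha, _ => by simp at ha
  | [x], a, b, ha, hb => by
    have ha' : x = a := by simpa using ha
    have hb' : x = b := by simpa using hb
    subst ha'; subst hb'
    simp [pathWeight]
  | x :: y :: rest, a, b, ha, hb => by
    have ha' : x = a := by simpa using ha
    have hb' : (y :: rest).getLast? = some b := by
      rwa [List.getLast?_cons_cons] at hb
    have ih := pathWeight_shift w c (y :: rest) y b rfl hb'
    subst ha'
    simp only [pathWeight] at ih ⊢
    rw [ih]; ring

lemma shortest_shift {V : Type} (E : V → V → Prop) (w : V → V → ℝ) (c : V → ℝ)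
    (p : List V) :
    IsShortestPath E (fun i j => w i j + (c j - c i)) p ↔ IsShortestPath E w p := by
  constructor
  · rintro ⟨hp, hmin⟩
    refine ⟨hp, fun q hq hqh hql => ?_⟩
    obtain ⟨a, ha⟩ : ∃ a, p.head? = some a := by
      cases p with
      | nil => exact hp.elim
      | cons x t => exact ⟨x, rfl⟩
    obtain ⟨b, hb⟩ : ∃ b, p.getLast? = some b := by
      cases p with
      | nil => exact hp.elim
      | cons x t => exact Option.isSome_iff_exists.mp (List.getLast?_isSome.mpr (by simp))
    have hp1 := pathWeight_shift w c p a b ha hb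
    have hq1 := pathWeight_shift w c q a b (hqh.trans ha) (hql.trans hb)
    have := hmin q hq hqh hql
    linarith
  · rintro ⟨hp, hmin⟩
    refine ⟨hp, fun q hq hqh hql => ?_⟩
    obtain ⟨a, ha⟩ : ∃ a, p.head? = some a := by
      cases p with
      | nil => exact hp.elim
      | cons x t => exact ⟨x, rfl⟩
    obtain ⟨b, hb⟩ : ∃ b, p.getLast? = some b := by
      cases p with
      | nil => exact hp.elim
      | cons x t => exact Option.isSome_iff_exists.mp (List.getLast?_isSome.mpr (by simp))
    have hp1 := pathWeight_shift w c p a b ha hb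
    have hq1 := pathWeight_shift w c q a b (hqh.trans ha) (hql.trans hb)
    have := hmin q hq hqh hql
    linarith

/-- every positively weighted DAG on n vertices admits a
shortest-paths preserving reweighting of aspect ratio at most n+1.
(Acyclicity is encoded as the existence of a topological order.) -/
theorem stmt2 (n : ℕ) (E : Fin n → Fin n → Prop) (w : Fin n → Fin n → ℝ)
    (hpos : ∀ i j, E i j → 0 < w i j)
    (hacyclic : ∃ f : Fin n → ℕ, ∀ i j, E i j → f i < f j) :
    ∃ wH : Fin n → Fin n → ℝ,
      (∀ i j, E i j → 0 < wH i j) ∧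
      (∀ p, IsShortestPath E wH p ↔ IsShortestPath E w p) ∧
      (∀ i j k l, E i j → E k l → wH i j ≤ ((n : ℝ) + 1) * wH k l) := by
  obtain ⟨f, hf⟩ := hacyclic
  set W : ℝ := (∑ i, ∑ j, |w i j|) + 1 with hWdef
  have hW0 : (0:ℝ) < W := by
    have : (0:ℝ) ≤ ∑ i, ∑ j, |w i j| :=
      Finset.sum_nonneg fun _ _ => Finset.sum_nonneg fun _ _ => abs_nonneg _
    linarith
  have hWle : ∀ i j : Fin n, w i j ≤ W := by
    intro i j
    have h1 : |w i j| ≤ ∑ j', |w i j'| :=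
      Finset.single_le_sum (f := fun j' => |w i j'|) (fun _ _ => abs_nonneg _) (Finset.mem_univ j)
    have h2 : (∑ j', |w i j'|) ≤ ∑ i', ∑ j', |w i' j'| :=
      Finset.single_le_sum (f := fun i' => ∑ j', |w i' j'|)
        (fun _ _ => Finset.sum_nonneg fun _ _ => abs_nonneg _) (Finset.mem_univ i)
    have h3 := le_abs_self (w i j)
    linarith
  set g : Fin n → ℕ := fun i =>
    (Finset.univ.filter (fun k => f k < f i ∨ (f k = f i ∧ k < i))).card with hgdef
  have hgn : ∀ i, g i < n := by
    intro i
    have hnm : i ∉ Finset.univ.filter (fun k => f k < f i ∨ (f k = f i ∧ k < i)) := by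
      simp [lt_irrefl]
    have hne : Finset.univ.filter (fun k => f k < f i ∨ (f k = f i ∧ k < i)) ≠
        (Finset.univ : Finset (Fin n)) := by
      intro h
      exact hnm (by rw [h]; exact Finset.mem_univ i)
    calc g i < (Finset.univ : Finset (Fin n)).card :=
          Finset.card_lt_card (Finset.ssubset_univ_iff.mpr hne)
      _ = n := by simp
  have hg : ∀ i j, E i j → g i < g j := by
    intro i j hij
    have hfij := hf i j hij
    have hsub : Finset.univ.filter (fun k => f k < f i ∨ (f k = f i ∧ k < i)) ⊆
        Finset.univ.filter (fun k => f k < f j ∨ (f k = f j ∧ k < j)) := by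
      intro k hk
      simp only [Finset.mem_filter, Finset.mem_univ, true_and] at hk ⊢
      rcases hk with h | ⟨h, _⟩
      · exact Or.inl (h.trans hfij)
      · exact Or.inl (h ▸ hfij)
    have hmem : i ∈ Finset.univ.filter (fun k => f k < f j ∨ (f k = f j ∧ k < j)) := by
      simp only [Finset.mem_filter, Finset.mem_univ, true_and]
      exact Or.inl hfij
    have hnm : i ∉ Finset.univ.filter (fun k => f k < f i ∨ (f k = f i ∧ k < i)) := by
      simp [lt_irrefl]
    exact Finset.card_lt_card (Finset.ssubset_def.mpr ⟨hsub, fun h => hnm (h hmem)⟩)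
  refine ⟨fun i j => w i j + ((fun v => W * (g v : ℝ)) j - (fun v => W * (g v : ℝ)) i),
    ?_, ?_, ?_⟩
  · intro i j hij
    have h1 : (g i : ℝ) + 1 ≤ (g j : ℝ) := by exact_mod_cast hg i j hij
    have h2 := hpos i j hij
    simp only
    nlinarith [mul_le_mul_of_nonneg_left h1 hW0.le]
  · intro p
    exact shortest_shift E w (fun v => W * (g v : ℝ)) p
  · intro i j k l hij hkl
    have h1 : w i j ≤ W := hWle i j
    have h2 : (0:ℝ) < w k l := hpos k l hkl
    have h3 : (g j : ℝ) + 1 ≤ (n : ℝ) := by exact_mod_cast hgn j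
    have h4 : (0:ℝ) ≤ (g i : ℝ) := Nat.cast_nonneg _
    have h5 : (g k : ℝ) + 1 ≤ (g l : ℝ) := by exact_mod_cast hg k l hkl
    have hn0 : (0:ℝ) ≤ (n : ℝ) := Nat.cast_nonneg _
    simp only
    have hA : w i j + (W * (g j : ℝ) - W * (g i : ℝ)) ≤ W * (n : ℝ) := by
      nlinarith [mul_le_mul_of_nonneg_left (show (g j : ℝ) ≤ (n:ℝ) - 1 by linarith) hW0.le,
        mul_nonneg hW0.le h4]
    have hB : W ≤ w k l + (W * (g l : ℝ) - W * (g k : ℝ)) := by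
      nlinarith [mul_le_mul_of_nonneg_left h5 hW0.le]
    have hC : W * (n : ℝ) ≤ ((n : ℝ) + 1) * (w k l + (W * (g l : ℝ) - W * (g k : ℝ))) := by
      nlinarith [mul_le_mul_of_nonneg_left hB (show (0:ℝ) ≤ (n:ℝ) + 1 by linarith)]
    linarith
end

section
/- Consider the directed graph on vertices u_0, u_1, ..., u_{n-1} with edges (u_i, u_{i+1}) for 0 ≤ i ≤ n-2, each of weight 1, together with one extra edge (u_0, u_{n-1}) of weight n. In this graph the path u_0, u_1, ..., u_{n-1} is the unique shortest path from u_0 to u_{n-1}. For any positive reweighting w_H of the edges under which this path remains strictly shorter than the single edge (u_0, u_{n-1}), the aspect ratio of w_H is at least n-1. -/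
lemma pw_lb {w : ℕ → ℕ → ℝ} {c : ℝ} (m : ℕ) :
    ∀ a, (∀ i, a ≤ i → i < a + m → c ≤ w i (i+1)) →
      (m : ℝ) * c ≤ pathWeight w (List.range' a (m+1)) := by
  induction m with
  | zero => intro a _; simp [pathWeight]
  | succ m ih =>
    intro a h
    have ih' := ih (a+1) (fun i h1 h2 => h i (by omega) (by omega))
    have h0 : c ≤ w a (a+1) := h a (by omega) (by omega)
    have e1 : List.range' a (m+2) = a :: (a+1) :: List.range' (a+2) m := by
      rw [List.range'_succ, List.range'_succ]
    have e2 : List.range' (a+1) (m+1) = (a+1) :: List.range' (a+2) m := by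
      rw [List.range'_succ]
    rw [e2] at ih'
    rw [e1]
    show ((m+1 : ℕ) : ℝ) * c ≤ w a (a+1) + pathWeight w ((a+1) :: List.range' (a+2) m)
    push_cast
    nlinarith

lemma pw_val {w : ℕ → ℕ → ℝ} (hone : ∀ i, w i (i+1) = 1) (m : ℕ) :
    ∀ a, pathWeight w (List.range' a (m+1)) = m := by
  induction m with
  | zero => intro a; simp [pathWeight]
  | succ m ih =>
    intro a
    have ih' := ih (a+1)
    have e1 : List.range' a (m+2) = a :: (a+1) :: List.range' (a+2) m := by
      rw [List.range'_succ, List.range'_succ]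
    have e2 : List.range' (a+1) (m+1) = (a+1) :: List.range' (a+2) m := by
      rw [List.range'_succ]
    rw [e2] at ih'
    rw [e1]
    show w a (a+1) + pathWeight w ((a+1) :: List.range' (a+2) m) = _
    rw [hone, ih']
    push_cast; ring

lemma path_shape {n : ℕ} {E : ℕ → ℕ → Prop}
    (hE : ∀ i j, E i j ↔ ((j = i + 1 ∧ j ≤ n - 1) ∨ (i = 0 ∧ j = n - 1))) :
    ∀ (q : List ℕ) (a : ℕ), IsPath E q → q.head? = some a → a ≠ 0 →
      q.getLast? = some (n-1) → q = List.range' a (n - a)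
  | [], a, hp, _, _, _ => hp.elim
  | [x], a, _, hh, ha, hl => by
    simp at hh hl
    have h2 : n - a = 1 := by omega
    rw [h2, List.range'_one, hh]
  | a :: b :: rest, a', hp, hh, ha, hl => by
    simp at hh; subst hh
    obtain ⟨he, hp'⟩ := hp
    rw [hE] at he
    have hb : b = a + 1 ∧ b ≤ n - 1 := by
      rcases he with h | h
      · exact h
      · exact absurd h.1 ha
    have hl' : (b :: rest).getLast? = some (n-1) := by
      rwa [List.getLast?_cons_cons] at hl
    have ih := path_shape hE (b :: rest) b hp' rfl (by omega) hl'
    have e : List.range' a (n - a) = a :: List.range' (a+1) (n - (a+1)) := by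
      have : n - a = (n - (a+1)) + 1 := by omega
      rw [this, List.range'_succ]
    rw [e, ← hb.1, ← ih]

/-- the path graph with a heavy shortcut edge.  The path
0,1,...,n-1 is the unique shortest path from 0 to n-1, and any positive
reweighting keeping it strictly shorter than the single edge (0,n-1) has
aspect ratio at least n-1. -/
theorem stmt3 (n : ℕ) (hn : 2 ≤ n)
    (E : ℕ → ℕ → Prop)
    (hE : ∀ i j, E i j ↔ ((j = i + 1 ∧ j ≤ n - 1) ∨ (i = 0 ∧ j = n - 1)))
    (w : ℕ → ℕ → ℝ)
    (hw : ∀ i j, w i j = if i = 0 ∧ j = n - 1 then (n : ℝ) else 1) :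
    (∀ q, IsPath E q → q.head? = some 0 → q.getLast? = some (n - 1) →
        q ≠ List.range n → pathWeight w (List.range n) < pathWeight w q) ∧
    (∀ wH : ℕ → ℕ → ℝ, (∀ i j, E i j → 0 < wH i j) →
      pathWeight wH (List.range n) < wH 0 (n - 1) →
      ∃ i j k l, E i j ∧ E k l ∧ ((n : ℝ) - 1) * wH k l ≤ wH i j) := by
  constructor
  · intro q hq hh hl hne
    match q, hq, hh, hl, hne with
    | [x], hq, hh, hl, hne =>
      simp at hh hl
      omega
    | x :: b :: rest, hq, hh, hl, hne =>
      simp at hh; subst hh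
      obtain ⟨he, hp'⟩ := hq
      have hl' : (b :: rest).getLast? = some (n-1) := by
        rwa [List.getLast?_cons_cons] at hl
      have hb0 : b ≠ 0 := by
        rw [hE] at he; rcases he with h | h <;> omega
      have hshape := path_shape hE (b :: rest) b hp' rfl hb0 hl'
      rw [hE] at he
      have hb : b = n - 1 := by
        rcases he with h | h
        · exfalso
          apply hne
          rw [hshape, h.1]
          have e0 : List.range n = List.range' 0 n := by rw [List.range_eq_range']
          rw [e0]
          have e1 : n = (n - 1) + 1 := by omega
          rw [e1, List.range'_succ]
          simp
        · exact h.2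
      subst hb
      have hrest : rest = [] := by
        have h1 : n - (n-1) = 1 := by omega
        rw [h1] at hshape
        simpa using hshape
      subst hrest
      have hn3 : 3 ≤ n := by
        by_contra h3
        have hn2 : n = 2 := by omega
        apply hne
        rw [hn2]
        decide
      have hone : ∀ i, w i (i+1) = 1 := by
        intro i
        rw [hw]
        have : ¬ (i = 0 ∧ i + 1 = n - 1) := by omega
        simp [this]
      have hval : pathWeight w (List.range n) = ((n : ℕ) - 1 : ℕ) := by
        rw [List.range_eq_range']
        have e1 : n = (n-1) + 1 := by omega
        rw [e1]
        exact pw_val hone (n-1) 0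
      have hq2 : pathWeight w [0, n-1] = w 0 (n-1) := by
        simp [pathWeight]
      rw [hval, hq2, hw, if_pos ⟨rfl, rfl⟩]
      exact_mod_cast (by omega : n - 1 < n)
  · intro wH hpos hlt
    have hne : (Finset.range (n-1)).Nonempty := ⟨0, by simp; omega⟩
    obtain ⟨k, hk, hmin⟩ := Finset.exists_min_image (Finset.range (n-1))
      (fun i => wH i (i+1)) hne
    simp at hk
    refine ⟨0, n-1, k, k+1, ?_, ?_, ?_⟩
    · rw [hE]; right; exact ⟨rfl, rfl⟩
    · rw [hE]; left; omega
    · have hlb : ((n-1 : ℕ) : ℝ) * wH k (k+1) ≤ pathWeight wH (List.range n) := by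
        rw [List.range_eq_range']
        have hn' : n = (n-1) + 1 := by omega
        rw [hn']
        apply pw_lb
        intro i h1 h2
        exact hmin i (by simp; omega)
      have hc : ((n-1 : ℕ) : ℝ) = (n : ℝ) - 1 := by
        push_cast [Nat.cast_sub (by omega : 1 ≤ n)]; ring
      rw [hc] at hlb
      linarith
end

section
/- Let H be any positive edge-weighting of a set of directed 3-cycles C_1,...,C_m (each C_i on vertices v_i^1, v_i^2, v_i^3) together with cross-cycle edges (v_i^k, v_{i+1}^k) for each i and k ∈ {1,2,3}. Suppose that for every i and every consecutive pair (v_i^k, v_i^{k'}) in cycle C_i, the 3-edge path consisting of the cross-cycle edge (v_i^k, v_{i+1}^k) followed by the two cycle edges of C_{i+1} from v_{i+1}^k to v_{i+1}^{k'} is strictly shorter under H than the 2-edge path consisting of the cycle edge (v_i^k, v_i^{k'}) followed by the cross-cycle edge (v_i^{k'}, v_{i+1}^{k'}). Then for every i, the total H-weight of the three edges of C_i is strictly greater than twice the total H-weight of the three edges of C_{i+1}. -/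
/-- Successor of position k in cycle C_i: cycles alternate orientation
(C_i is a forward cycle for odd i, backward for even i). -/
def nxt (i : ℕ) (k : Fin 3) : Fin 3 := if i % 2 = 1 then k + 1 else k - 1

/-- Edges of the directed lower-bound construction: cycle edges within C_i
(1 ≤ i ≤ m) and cross-cycle edges from v_i^k to v_{i+1}^k. -/
def cycE (m : ℕ) (u v : ℕ × Fin 3) : Prop :=
  (v.1 = u.1 ∧ 1 ≤ u.1 ∧ u.1 ≤ m ∧ v.2 = nxt u.1 u.2) ∨
  (v.1 = u.1 + 1 ∧ 1 ≤ u.1 ∧ u.1 + 1 ≤ m ∧ v.2 = u.2)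

/-- if under a positive weighting H each canonical 3-edge path
(cross edge, then two edges of C_{i+1}) is strictly shorter than the competing
2-edge path (edge of C_i, then cross edge), then w_H(C_i) > 2 w_H(C_{i+1}). -/
theorem stmt5 (m : ℕ) (H : ℕ × Fin 3 → ℕ × Fin 3 → ℝ)
    (hpos : ∀ u v, 0 < H u v)
    (hineq : ∀ i : ℕ, 1 ≤ i → i + 1 ≤ m → ∀ k : Fin 3,
      H (i, k) (i + 1, k) + H (i + 1, k) (i + 1, nxt (i + 1) k)
          + H (i + 1, nxt (i + 1) k) (i + 1, nxt i k)
        < H (i, k) (i, nxt i k) + H (i, nxt i k) (i + 1, nxt i k)) :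
    ∀ i : ℕ, 1 ≤ i → i + 1 ≤ m →
      (∑ k : Fin 3, H (i, k) (i, nxt i k))
        > 2 * ∑ k : Fin 3, H (i + 1, k) (i + 1, nxt (i + 1) k) := by
  intro i h1 h2
  have h0 := hineq i h1 h2 0
  have hA := hineq i h1 h2 1
  have hB := hineq i h1 h2 2
  rcases Nat.mod_two_eq_zero_or_one i with hp | hp
  · have hp1 : (i + 1) % 2 = 1 := by omega
    simp only [nxt, hp, hp1, Nat.one_ne_zero, Nat.zero_ne_one, if_true, if_false,
      reduceIte, Fin.sum_univ_three,
      show (0:Fin 3)+1=1 from rfl, show (1:Fin 3)+1=2 from rfl, show (2:Fin 3)+1=0 from rfl,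
      show (0:Fin 3)-1=2 from rfl, show (1:Fin 3)-1=0 from rfl, show (2:Fin 3)-1=1 from rfl]
      at h0 hA hB ⊢
    linarith
  · have hp1 : (i + 1) % 2 = 0 := by omega
    simp only [nxt, hp, hp1, Nat.one_ne_zero, Nat.zero_ne_one, if_true, if_false,
      reduceIte, Fin.sum_univ_three,
      show (0:Fin 3)+1=1 from rfl, show (1:Fin 3)+1=2 from rfl, show (2:Fin 3)+1=0 from rfl,
      show (0:Fin 3)-1=2 from rfl, show (1:Fin 3)-1=0 from rfl, show (2:Fin 3)-1=1 from rfl]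
      at h0 hA hB ⊢
    linarith
end

section
/- In the directed graph G consisting of m := n/3 directed 3-cycles C_1,...,C_m (alternating orientation), with all edges of C_i having weight 1/3^i, and cross-cycle edges (v_i^k, v_{i+1}^k) of weight 0 for each i and k: for every i and every consecutive pair (v_i^k, v_i^{k'}) in C_i, the 3-edge path from v_i^k to v_{i+1}^{k'} given by the cross-cycle edge (v_i^k, v_{i+1}^k) followed by the two edges of C_{i+1} from v_{i+1}^k to v_{i+1}^{k'} is a shortest path from v_i^k to v_{i+1}^{k'} in G. -/
/-- Weights of the directed construction: edges of C_i weigh 1/3^i,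
cross-cycle edges weigh 0. -/
noncomputable def cycW (u v : ℕ × Fin 3) : ℝ :=
  if u.1 = v.1 then (1 : ℝ) / 3 ^ u.1 else 0


def dstF (i : ℕ) (a b : Fin 3) : Fin 3 := if i % 2 = 1 then b - a else a - b

def f3 : Fin 3 → ℕ := ![0, 2, 1]

noncomputable def phi (i : ℕ) (k : Fin 3) (u : ℕ × Fin 3) : ℝ :=
  if u.1 < i then 0
  else if u.1 = i then ((dstF i k u.2).val : ℝ) / 3 ^ i - 2 / 3 ^ i
  else if u.1 = i + 1 then (f3 (dstF i k u.2) : ℝ) / 3 ^ (i + 1) - 2 / 3 ^ i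
  else -2 / 3 ^ i

lemma phi_lt {i : ℕ} {k : Fin 3} {u : ℕ × Fin 3} (h : u.1 < i) : phi i k u = 0 := by
  simp [phi, h]

lemma phi_at {i : ℕ} {k : Fin 3} {u : ℕ × Fin 3} (h : u.1 = i) :
    phi i k u = ((dstF i k u.2).val : ℝ) / 3 ^ i - 2 / 3 ^ i := by
  simp [phi, h]

lemma phi_at1 {i : ℕ} {k : Fin 3} {u : ℕ × Fin 3} (h : u.1 = i + 1) :
    phi i k u = (f3 (dstF i k u.2) : ℝ) / 3 ^ (i + 1) - 2 / 3 ^ i := by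
  simp [phi, h]

lemma phi_gt {i : ℕ} {k : Fin 3} {u : ℕ × Fin 3} (h : i + 1 < u.1) :
    phi i k u = -2 / 3 ^ i := by
  simp [phi, show ¬ u.1 < i by omega, show ¬ u.1 = i by omega, show ¬ u.1 = i + 1 by omega]

lemma L1 (i : ℕ) (k p : Fin 3) : (dstF i k (nxt i p)).val ≤ (dstF i k p).val + 1 := by
  rcases Nat.mod_two_eq_zero_or_one i with h | h <;>
  · simp only [dstF, nxt, h]
    revert k p
    decide

lemma L2 (i : ℕ) (k p : Fin 3) :
    f3 (dstF i k (nxt (i + 1) p)) ≤ f3 (dstF i k p) + 1 := by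
  rcases Nat.mod_two_eq_zero_or_one i with h | h <;>
  · have h2 : (i + 1) % 2 = 1 - i % 2 := by omega
    simp only [dstF, nxt, h, h2]
    revert k p
    decide

lemma L3 (t : Fin 3) : (f3 t : ℕ) ≤ 3 * t.val := by revert t; decide

lemma L4 (i : ℕ) (k : Fin 3) : dstF i k (nxt i k) = 1 := by
  rcases Nat.mod_two_eq_zero_or_one i with h | h <;>
  · simp only [dstF, nxt, h]
    revert k
    decide

lemma L5 (i : ℕ) (k : Fin 3) : nxt (i + 1) (nxt (i + 1) k) = nxt i k := by
  rcases Nat.mod_two_eq_zero_or_one i with h | h <;>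
  · have h2 : (i + 1) % 2 = 1 - i % 2 := by omega
    simp only [nxt, h, h2]
    revert k
    decide

lemma key (m i : ℕ) (k : Fin 3) (u v : ℕ × Fin 3) (h : cycE m u v) :
    phi i k v - phi i k u ≤ cycW u v := by
  have h3 : (0:ℝ) < 3 ^ i := by positivity
  have h3' : (0:ℝ) < 3 ^ (i+1) := by positivity
  have h3u : (0:ℝ) < 3 ^ u.1 := by positivity
  rcases h with ⟨hv1, _, _, hv2⟩ | ⟨hv1, _, _, hv2⟩
  · -- cycle edge, weight 1/3^u.1
    have hw : cycW u v = 1 / 3 ^ u.1 := by simp [cycW, hv1]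
    rw [hw]
    have : u.1 < i ∨ u.1 = i ∨ u.1 = i + 1 ∨ i + 1 < u.1 := by omega
    rcases this with h1 | h1 | h1 | h1
    · rw [phi_lt (show v.1 < i by omega), phi_lt h1]
      have : (0:ℝ) ≤ 1 / 3 ^ u.1 := by positivity
      linarith
    · rw [phi_at (show v.1 = i by omega), phi_at h1, hv2, h1]
      have hd : ((dstF i k (nxt i u.2)).val : ℝ) / 3 ^ i
          ≤ ((dstF i k u.2).val + 1) / 3 ^ i := by
        gcongr
        exact_mod_cast L1 i k u.2
      rw [add_div] at hd
      linarith
    · rw [phi_at1 (show v.1 = i + 1 by omega), phi_at1 h1, hv2, h1]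
      have hd : ((f3 (dstF i k (nxt (i+1) u.2)) : ℕ) : ℝ) / 3 ^ (i+1)
          ≤ ((f3 (dstF i k u.2) : ℕ) + 1) / 3 ^ (i+1) := by
        gcongr
        exact_mod_cast L2 i k u.2
      rw [add_div] at hd
      linarith
    · rw [phi_gt (show i + 1 < v.1 by omega), phi_gt h1]
      have : (0:ℝ) ≤ 1 / 3 ^ u.1 := by positivity
      linarith
  · -- cross edge, weight 0
    have hw : cycW u v = 0 := by simp [cycW, hv1]
    rw [hw, sub_nonpos]
    have : u.1 + 1 < i ∨ u.1 + 1 = i ∨ u.1 = i ∨ u.1 = i + 1 ∨ i + 1 < u.1 := by omega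
    rcases this with h1 | h1 | h1 | h1 | h1
    · rw [phi_lt (show v.1 < i by omega), phi_lt (by omega)]
    · rw [phi_at (show v.1 = i by omega), phi_lt (by omega)]
      have hd : ((dstF i k v.2).val : ℝ) ≤ 2 := by
        have := (dstF i k v.2).isLt
        exact_mod_cast by omega
      have : ((dstF i k v.2).val : ℝ) / 3 ^ i ≤ 2 / 3 ^ i := by gcongr
      linarith
    · rw [phi_at1 (show v.1 = i + 1 by omega), phi_at h1, hv2]
      have hd : ((f3 (dstF i k u.2) : ℕ) : ℝ) / 3 ^ (i+1)
          ≤ (3 * ((dstF i k u.2).val : ℝ)) / 3 ^ (i+1) := by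
        gcongr
        exact_mod_cast L3 (dstF i k u.2)
      have e2 : (3 * ((dstF i k u.2).val : ℝ)) / 3 ^ (i+1)
          = ((dstF i k u.2).val : ℝ) / 3 ^ i := by
        rw [pow_succ, mul_comm ((3:ℝ)^i) 3, mul_div_mul_left _ _ (by norm_num : (3:ℝ) ≠ 0)]
      rw [e2] at hd
      linarith
    · rw [phi_gt (show i + 1 < v.1 by omega), phi_at1 h1]
      have : (0:ℝ) ≤ ((f3 (dstF i k u.2) : ℕ) : ℝ) / 3 ^ (i+1) := by positivity
      have e : (-2:ℝ)/3^i = -(2/3^i) := by ring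
      rw [e]
      linarith
    · rw [phi_gt (show i + 1 < v.1 by omega), phi_gt h1]

lemma pw_lb_s6 {V : Type} (E : V → V → Prop) (w : V → V → ℝ) (φ : V → ℝ)
    (hE : ∀ u v, E u v → φ v - φ u ≤ w u v) :
    ∀ q : List V, IsPath E q → ∀ a b, q.head? = some a → q.getLast? = some b →
      φ b - φ a ≤ pathWeight w q := by
  intro q
  induction q with
  | nil => intro h; simp [IsPath] at h
  | cons x t ih =>
    cases t with
    | nil =>
      intro _ a b ha hb
      simp at ha hb
      subst ha; subst hb
      simp [pathWeight]
    | cons y r =>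
      intro h a b ha hb
      obtain ⟨hxy, hrest⟩ := h
      simp at ha
      subst ha
      rw [List.getLast?_cons_cons] at hb
      have hIH := ih hrest y b rfl hb
      have hedge := hE x y hxy
      show φ b - φ x ≤ w x y + pathWeight w (y :: r)
      linarith


/-- each canonical 3-edge path (cross edge from v_i^k, then two
edges of C_{i+1} from v_{i+1}^k to v_{i+1}^{k'}) is a shortest path. -/
theorem stmt6 (m : ℕ) (i : ℕ) (hi : 1 ≤ i) (him : i + 1 ≤ m) (k : Fin 3) :
    IsShortestPath (cycE m) cycW
      [((i, k) : ℕ × Fin 3), (i + 1, k), (i + 1, nxt (i + 1) k), (i + 1, nxt i k)] := by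

  constructor
  · refine ⟨?_, ?_, ?_, trivial⟩
    · exact Or.inr ⟨rfl, hi, him, rfl⟩
    · exact Or.inl ⟨rfl, by omega, him, rfl⟩
    · exact Or.inl ⟨rfl, by omega, him, (L5 i k).symm⟩
  · intro q hq hhead hlast
    have hpw : pathWeight cycW
        [((i, k) : ℕ × Fin 3), (i + 1, k), (i + 1, nxt (i + 1) k), (i + 1, nxt i k)]
        = 2 / 3 ^ (i + 1) := by
      simp [pathWeight, cycW]
      ring
    rw [hpw]
    simp only [List.head?_cons] at hhead
    have hlast' : q.getLast? = some ((i + 1, nxt i k) : ℕ × Fin 3) := by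
      rw [hlast]; rfl
    have hlb := pw_lb_s6 (cycE m) cycW (phi i k) (key m i k) q hq (i, k) (i + 1, nxt i k)
      hhead hlast'
    have e1 : phi i k (i, k) = -(2 / 3 ^ i) := by
      rw [phi_at (u := ((i, k) : ℕ × Fin 3)) rfl]
      have : dstF i k k = 0 := by
        rcases Nat.mod_two_eq_zero_or_one i with h | h <;> simp [dstF, h]
      simp [this]
    have e2 : phi i k (i + 1, nxt i k) = 2 / 3 ^ (i + 1) - 2 / 3 ^ i := by
      rw [phi_at1 (u := ((i + 1, nxt i k) : ℕ × Fin 3)) rfl]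
      have : f3 (dstF i k (nxt i k)) = 2 := by rw [L4]; rfl
      rw [this]
      norm_num
    rw [e1, e2] at hlb
    linarith
end

section
/- Let H be any positive edge-weighting of the undirected 5-cycle construction (cycles C_1,...,C_m with the described cross-cycle edges). Suppose that for every i and every vertex v_i^k (with cross-cycle neighbor v_{i+1}^j), the 3-edge path (cross-cycle edge, then two edges of C_{i+1} from v_{i+1}^j to v_{i+1}^{j+2 mod 5}) is strictly shorter under H than the 2-edge path (edge of C_i from v_i^k to v_i^{k+1 mod 5}, then the cross-cycle edge from v_i^{k+1 mod 5} to v_{i+1}^{j+2 mod 5}). Then for every i, w_H(C_i) > 2·w_H(C_{i+1}), where w_H(C) denotes the sum of the H-weights of the edges of the 5-cycle C. -/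
/-- Cross-edge pattern of the undirected construction: the cross edge from
v_i^k goes to v_{i+1}^{2k} (superscripts mod 5). -/
def cross5 (k : Fin 5) : Fin 5 := 2 * k

/-- Edges (symmetric) of the undirected lower-bound construction: the 5-cycle
edges of C_i (1 ≤ i ≤ m) and the cross-cycle edges v_i^k — v_{i+1}^{2k}. -/
def undirE (m : ℕ) (u v : ℕ × Fin 5) : Prop :=
  (u.1 = v.1 ∧ 1 ≤ u.1 ∧ u.1 ≤ m ∧ (v.2 = u.2 + 1 ∨ u.2 = v.2 + 1)) ∨
  (v.1 = u.1 + 1 ∧ 1 ≤ u.1 ∧ u.1 + 1 ≤ m ∧ v.2 = cross5 u.2) ∨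
  (u.1 = v.1 + 1 ∧ 1 ≤ v.1 ∧ v.1 + 1 ≤ m ∧ u.2 = cross5 v.2)

/-!
Sum the five strict inequalities. The cross edge `v_i^k — v_{i+1}^{2k}` on the left of
inequality `k` is the cross edge on the right of inequality `k - 1`, so the cross edges cancel;
since `k ↦ 2k` and `k ↦ 2k + 1` are bijections mod 5, every edge of `C_{i+1}` occurs exactly
twice on the left.
-/

theorem two_mul_sum_lt_sum_of_forall_lt {ι : Type*} [Fintype ι] [Nonempty ι]
    (shift σ τ : ι ≃ ι) (c d e : ι → ℝ)
    (h : ∀ k, c k + e (σ k) + e (τ k) < d k + c (shift k)) :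
    2 * ∑ k, e k < ∑ k, d k := by
  have hsum := Finset.sum_lt_sum_of_nonempty Finset.univ_nonempty fun k _ => h k
  simp only [Finset.sum_add_distrib, Equiv.sum_comp] at hsum
  linarith

def cross5Equiv : Fin 5 ≃ Fin 5 where
  toFun := cross5
  invFun k := 3 * k
  left_inv := by decide
  right_inv := by decide

theorem cross5_add_one (k : Fin 5) : cross5 (k + 1) = cross5 k + 2 := by
  simp only [cross5, mul_add, mul_one]

theorem stmt10_general (m : ℕ) (H : ℕ × Fin 5 → ℕ × Fin 5 → ℝ)
    (hineq : ∀ i : ℕ, 1 ≤ i → i + 1 ≤ m → ∀ k : Fin 5,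
      H (i, k) (i + 1, cross5 k) + H (i + 1, cross5 k) (i + 1, cross5 k + 1)
          + H (i + 1, cross5 k + 1) (i + 1, cross5 k + 2)
        < H (i, k) (i, k + 1) + H (i, k + 1) (i + 1, cross5 k + 2)) :
    ∀ i : ℕ, 1 ≤ i → i + 1 ≤ m →
      (∑ k : Fin 5, H (i, k) (i, k + 1))
        > 2 * ∑ k : Fin 5, H (i + 1, k) (i + 1, k + 1) := by
  intro i hi hm
  refine two_mul_sum_lt_sum_of_forall_lt (Equiv.addRight 1) cross5Equiv
    (cross5Equiv.trans (Equiv.addRight 1)) (fun k => H (i, k) (i + 1, cross5 k))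
    (fun k => H (i, k) (i, k + 1)) (fun j => H (i + 1, j) (i + 1, j + 1)) fun k => ?_
  simp only [cross5Equiv, Equiv.coe_fn_mk, Equiv.trans_apply, Equiv.coe_addRight,
    cross5_add_one, add_assoc (cross5 k)]
  exact hineq i hi hm k

/-- if under a positive symmetric weighting H each canonical
3-edge path is strictly shorter than the competing 2-edge path (cycle edge of
C_i then cross edge), then w_H(C_i) > 2 w_H(C_{i+1}). -/
theorem stmt10 (m : ℕ) (H : ℕ × Fin 5 → ℕ × Fin 5 → ℝ)
    (hsymm : ∀ u v, H u v = H v u)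
    (hpos : ∀ u v, 0 < H u v)
    (hineq : ∀ i : ℕ, 1 ≤ i → i + 1 ≤ m → ∀ k : Fin 5,
      H (i, k) (i + 1, cross5 k) + H (i + 1, cross5 k) (i + 1, cross5 k + 1)
          + H (i + 1, cross5 k + 1) (i + 1, cross5 k + 2)
        < H (i, k) (i, k + 1) + H (i, k + 1) (i + 1, cross5 k + 2)) :
    ∀ i : ℕ, 1 ≤ i → i + 1 ≤ m →
      (∑ k : Fin 5, H (i, k) (i, k + 1))
        > 2 * ∑ k : Fin 5, H (i + 1, k) (i + 1, k + 1) :=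
  stmt10_general m H hineq
end

section
/- There exists a family of n-node undirected graphs G with positive edge weights such that every positive reweighting w_H of the edges of G under which every shortest path of w_H is also a shortest path of G has aspect ratio at least 2^{cn} for some absolute constant c > 0. -/
namespace S11

variable {V : Type} {E : V → V → Prop} {w : V → V → ℝ}

lemma pw_cc (a b : V) (r) : pathWeight w (a :: b :: r) = w a b + pathWeight w (b :: r) := rfl

lemma isPath_suffix : ∀ (l l' : List V), IsPath E (l ++ l') → l' ≠ [] → IsPath E l'
  | [], _, h, _ => h
  | [a], c :: r', h, _ => h.2
  | [_], [], _, hne => absurd rfl hne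
  | a :: b :: l, l', h, hne => isPath_suffix (b :: l) l' h.2 hne

lemma isPath_prefix : ∀ (l : List V) (x : V) (l'), IsPath E (l ++ x :: l') → IsPath E (l ++ [x])
  | [], x, l', _ => trivial
  | [a], x, l', h => ⟨h.1, trivial⟩
  | a :: b :: l, x, l', h => ⟨h.1, isPath_prefix (b :: l) x l' h.2⟩

lemma pathWeight_append : ∀ (l : List V) (x : V) (l'),
    pathWeight w (l ++ x :: l') = pathWeight w (l ++ [x]) + pathWeight w (x :: l')
  | [], x, l' => by simp [pathWeight]
  | [a], x, l' => by
    show w a x + pathWeight w (x :: l') = (w a x + pathWeight w [x]) + pathWeight w (x :: l')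
    simp [pathWeight]
  | a :: b :: r, x, l' => by
    have ih := pathWeight_append (b :: r) x l'
    simp only [List.cons_append] at ih ⊢
    rw [pw_cc, pw_cc, ih]; ring

lemma pathWeight_nonneg (hw : ∀ i j, E i j → 0 ≤ w i j) :
    ∀ p, IsPath E p → 0 ≤ pathWeight w p
  | [], _ => le_of_eq rfl
  | [a], _ => le_of_eq rfl
  | a :: b :: r, h => by
    have h1 := hw a b h.1
    have h2 := pathWeight_nonneg hw (b :: r) h.2
    simp only [pw_cc]; linarith

lemma surgery_aux (hw : ∀ i j, E i j → 0 ≤ w i j) :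
    ∀ (N : ℕ) (p : List V), p.length ≤ N → IsPath E p → ∃ q, IsPath E q ∧ q.Nodup ∧
      q.head? = p.head? ∧ q.getLast? = p.getLast? ∧ (∀ x ∈ q, x ∈ p) ∧
      pathWeight w q ≤ pathWeight w p := by
  intro N
  induction N with
  | zero =>
    intro p hl hp
    rcases p with _ | ⟨a, r⟩
    · exact absurd hp id
    · simp at hl
  | succ N ih =>
    intro p hl hp
    rcases p with _ | ⟨a, rest⟩
    · exact absurd hp id
    by_cases ha : a ∈ rest
    · obtain ⟨B, C, hBC⟩ := List.append_of_mem ha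
      subst hBC
      have hsplit : a :: (B ++ a :: C) = (a :: B) ++ a :: C := by simp
      have hpath2 : IsPath E (a :: C) := by
        apply isPath_suffix (a :: B) (a :: C)
        · rw [← hsplit]; exact hp
        · simp
      have hlen : (a :: C).length ≤ N := by
        simp only [List.length_cons, List.length_append] at hl ⊢; omega
      obtain ⟨q, hq1, hq2, hq3, hq4, hq5, hq6⟩ := ih (a :: C) hlen hpath2
      refine ⟨q, hq1, hq2, by simpa using hq3, ?_, ?_, ?_⟩
      · rw [hq4, hsplit, List.getLast?_append_of_ne_nil _ (by simp)]
      · intro x hx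
        have := hq5 x hx
        simp at this ⊢
        tauto
      · have hdec : pathWeight w (a :: (B ++ a :: C)) =
            pathWeight w ((a :: B) ++ [a]) + pathWeight w (a :: C) := by
          rw [hsplit]; exact pathWeight_append (a :: B) a C
        have hpre : IsPath E ((a :: B) ++ [a]) := by
          apply isPath_prefix (a :: B) a C; rw [← hsplit]; exact hp
        have hnn := pathWeight_nonneg hw _ hpre
        rw [hdec]; linarith
    · rcases rest with _ | ⟨b, r⟩
      · exact ⟨[a], trivial, by simp, rfl, rfl, by simp, le_rfl⟩
      obtain ⟨q, hq1, hq2, hq3, hq4, hq5, hq6⟩ := ih (b :: r) (by simpa using hl) hp.2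
      rcases q with _ | ⟨b', q'⟩
      · simp at hq3
      have hb : b' = b := by simpa using hq3
      subst hb
      refine ⟨a :: b' :: q', ⟨hp.1, hq1⟩, ?_, rfl, ?_, ?_, ?_⟩
      · refine List.nodup_cons.2 ⟨fun hmem => ha (hq5 _ hmem), hq2⟩
      · rw [List.getLast?_cons_cons, List.getLast?_cons_cons]
        exact hq4
      · intro x hx
        rcases List.mem_cons.1 hx with h | h
        · simp [h]
        · simp [hq5 x h]
      · rw [pw_cc, pw_cc]; linarith

lemma surgery (hw : ∀ i j, E i j → 0 ≤ w i j) (p : List V) (hp : IsPath E p) :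
    ∃ q, IsPath E q ∧ q.Nodup ∧ q.head? = p.head? ∧ q.getLast? = p.getLast? ∧
      (∀ x ∈ q, x ∈ p) ∧ pathWeight w q ≤ pathWeight w p :=
  surgery_aux hw p.length p le_rfl hp

open Classical in
lemma exists_shortest [Fintype V] [DecidableEq V]
    (hw : ∀ i j, E i j → 0 ≤ w i j) (p₀ : List V) (hp₀ : IsPath E p₀) :
    ∃ q, IsShortestPath E w q ∧ q.head? = p₀.head? ∧ q.getLast? = p₀.getLast? := by
  classical
  let T : Finset {l : List V // l.Nodup} := Finset.univ.filter
    (fun l => IsPath E l.1 ∧ l.1.head? = p₀.head? ∧ l.1.getLast? = p₀.getLast?)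
  have hne : T.Nonempty := by
    obtain ⟨q, h1, h2, h3, h4, _, _⟩ := surgery hw p₀ hp₀
    exact ⟨⟨q, h2⟩, by simp [T, Finset.mem_filter]; exact ⟨h1, h3, h4⟩⟩
  obtain ⟨l, hl, hmin⟩ := T.exists_min_image (fun l => pathWeight w l.1) hne
  simp only [T, Finset.mem_filter, Finset.mem_univ, true_and] at hl
  refine ⟨l.1, ⟨hl.1, ?_⟩, hl.2.1, hl.2.2⟩
  intro q hq hqh hql
  obtain ⟨q', h1, h2, h3, h4, _, h6⟩ := surgery hw q hq
  have hmem : (⟨q', h2⟩ : {l : List V // l.Nodup}) ∈ T := by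
    simp only [T, Finset.mem_filter, Finset.mem_univ, true_and]
    exact ⟨h1, by rw [h3, hqh, hl.2.1], by rw [h4, hql, hl.2.2]⟩
  exact le_trans (hmin _ hmem) h6

lemma pot_lb (φ : V → ℝ) (hcons : ∀ x y, E x y → φ x ≤ w x y + φ y) :
    ∀ p (a b : V), IsPath E p → p.head? = some a → p.getLast? = some b →
      φ a ≤ pathWeight w p + φ b
  | [], a, b, hp, _, _ => absurd hp id
  | [x], a, b, _, hh, hl => by
    simp at hh hl; subst hh; subst hl; simp [pathWeight]
  | x :: y :: r, a, b, hp, hh, hl => by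
    have hh' : x = a := by simpa using hh
    subst hh'
    have ih := pot_lb φ hcons (y :: r) y b hp.2 rfl (by simpa using hl)
    have := hcons x y hp.1
    show φ x ≤ w x y + pathWeight w (y :: r) + φ b
    linarith

/-- chain certificate: P is the strictly-forced geodesic to `v`. -/
def Chain (E : V → V → Prop) (w : V → V → ℝ) (φ : V → ℝ) (v : V) : List V → Prop
  | [] => False
  | [x] => x = v
  | x :: y :: r => x ≠ v ∧ E x y ∧ φ x = w x y + φ y ∧
      (∀ b, E x b → b ≠ y → φ x < w x b + φ b) ∧ Chain E w φ v (y :: r)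

lemma chain_isPath {φ : V → ℝ} {v : V} : ∀ P, Chain E w φ v P → IsPath E P
  | [], h => h
  | [x], _ => trivial
  | x :: y :: r, h => ⟨h.2.1, chain_isPath (y :: r) h.2.2.2.2⟩

lemma chain_last {φ : V → ℝ} {v : V} : ∀ P, Chain E w φ v P → P.getLast? = some v
  | [], h => absurd h id
  | [x], h => by have hx : x = v := h; simp [hx]
  | x :: y :: r, h => by
    rw [List.getLast?_cons_cons]; exact chain_last (y :: r) h.2.2.2.2

lemma chain_weight {φ : V → ℝ} {v : V} :
    ∀ P (a : V), Chain E w φ v P → P.head? = some a → pathWeight w P = φ a - φ v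
  | [], a, h, _ => absurd h id
  | [x], a, h, hh => by
    have hx : x = v := h
    simp at hh; subst hh; simp [pathWeight, hx]
  | x :: y :: r, a, h, hh => by
    have hh' : x = a := by simpa using hh
    subst hh'
    have ih := chain_weight (y :: r) y h.2.2.2.2 rfl
    show w x y + pathWeight w (y :: r) = φ x - φ v
    rw [ih, h.2.2.1]; ring

lemma forced (φ : V → ℝ) (hcons : ∀ x y, E x y → φ x ≤ w x y + φ y)
    (hnn : ∀ x, 0 ≤ φ x) (v : V) (hv : φ v = 0)
    (hwpos : ∀ x y, E x y → 0 < w x y) :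
    ∀ P, Chain E w φ v P → ∀ p, IsPath E p → p.head? = P.head? →
      p.getLast? = some v → pathWeight w p ≤ pathWeight w P → p = P
  | [], hP, p, _, _, _, _ => absurd hP id
  | [x], hP, p, hp, hph, hpl, hpw => by
    have hx : x = v := hP
    rcases p with _ | ⟨a, q⟩
    · exact absurd hp id
    have ha : a = x := by simpa using hph
    subst ha
    rcases q with _ | ⟨b, s⟩
    · rfl
    · exfalso
      have hlb := pot_lb φ hcons (b :: s) b v hp.2 rfl (by simpa using hpl)
      have hwab := hwpos a b hp.1
      have h1 : pathWeight w (a :: b :: s) = w a b + pathWeight w (b :: s) := rfl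
      have hPw : pathWeight w [a] = 0 := rfl
      rw [hPw, h1] at hpw
      have hb := hnn b
      have hav : φ a = 0 := by rw [hx, hv]
      linarith
  | x :: y :: r, hP, p, hp, hph, hpl, hpw => by
    obtain ⟨hxv, hExy, htight, hstrict, hchain⟩ := hP
    rcases p with _ | ⟨a, q⟩
    · exact absurd hp id
    have ha : a = x := by simpa using hph
    subst ha
    rcases q with _ | ⟨b, s⟩
    · exfalso
      have : a = v := by simpa using hpl
      exact hxv this
    have hlb := pot_lb φ hcons (b :: s) b v hp.2 rfl (by simpa using hpl)
    have hPval : pathWeight w (a :: y :: r) = φ a - φ v :=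
      chain_weight _ a ⟨hxv, hExy, htight, hstrict, hchain⟩ rfl
    have hpw1 : pathWeight w (a :: b :: s) = w a b + pathWeight w (b :: s) := rfl
    have hbeq : b = y := by
      by_contra hbne
      have := hstrict b hp.1 hbne
      rw [hpw1, hPval, hv] at hpw
      linarith
    subst hbeq
    have hrec : pathWeight w (b :: s) ≤ pathWeight w (b :: r) := by
      have hPval2 : pathWeight w (b :: r) = φ b - φ v := chain_weight _ b hchain rfl
      rw [hpw1, hPval, htight] at hpw
      rw [hPval2]
      linarith
    have := forced φ hcons hnn v hv hwpos (b :: r) hchain (b :: s) hp.2 rfl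
      (by simpa using hpl) hrec
    rw [this]

lemma constraint [Fintype V] [DecidableEq V] {wH : V → V → ℝ}
    (hwpos : ∀ x y, E x y → 0 < w x y) (hwHpos : ∀ x y, E x y → 0 < wH x y)
    (hpres : ∀ p, IsShortestPath E wH p → IsShortestPath E w p)
    (φ : V → ℝ) (hcons : ∀ x y, E x y → φ x ≤ w x y + φ y)
    (hnn : ∀ x, 0 ≤ φ x) (v : V) (hv : φ v = 0)
    (P : List V) (hP : Chain E w φ v P)
    (Q : List V) (hQ : IsPath E Q) (hQh : Q.head? = P.head?) (hQl : Q.getLast? = some v) :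
    pathWeight wH P ≤ pathWeight wH Q := by
  have hPpath : IsPath E P := chain_isPath P hP
  have hPlast : P.getLast? = some v := chain_last P hP
  obtain ⟨ps, hps, hph, hpl⟩ := exists_shortest (fun i j h => (hwHpos i j h).le) P hPpath
  have hws := hpres _ hps
  -- ps has w-weight ≤ that of P, so ps = P by `forced`
  have hle : pathWeight w ps ≤ pathWeight w P := hws.2 P hPpath (by rw [hph]) (by rw [hpl])
  rcases P with _ | ⟨u, Pr⟩
  · exact absurd hPpath id
  have hpeq : ps = u :: Pr := by
    refine forced φ hcons hnn v hv hwpos (u :: Pr) hP ps hws.1 (by rw [hph]) ?_ hle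
    rw [hpl, hPlast]
  subst hpeq
  exact hps.2 Q hQ (by rw [hQh, hph]) (by rw [hQl, ← hPlast, hpl])



/-- oriented edge relation on ℕ (x < y implied), m = number of 5-blocks -/
def R (m x y : ℕ) : Prop :=
  (y < 5*m ∧ y = x + 1 ∧ x/5 = y/5) ∨
  (y < 5*m ∧ y = x + 4 ∧ x % 5 = 0) ∨
  (y < 5 ∧ (y = x + 2 ∨ y = x + 3)) ∨
  (y < 5*m ∧ y = 5*(x/5) + 5 + (2*(x%5)) % 5)

def Ed (m x y : ℕ) : Prop := R m x y ∨ R m y x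

noncomputable def w2 (x y : ℕ) : ℝ :=
  if (y = x+1 ∧ x/5 = y/5) ∨ (y = x+4 ∧ x%5 = 0) then (3:ℝ)⁻¹ ^ (x/5)
  else if y < 5 ∧ (y = x+2 ∨ y = x+3) then 4
  else 1

noncomputable def wt (x y : ℕ) : ℝ := if x ≤ y then w2 x y else w2 y x

def ψv : ℕ → ℝ := fun k => if k = 0 then 2 else if k = 1 then 0 else 1
def χv : ℕ → ℝ := fun k => if k = 0 then 0 else if k = 1 then 1 else if k = 4 then 1 else 2
def hv : ℕ → ℝ := fun k => if k = 0 then 0 else 1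

noncomputable def φx (t j x : ℕ) : ℝ :=
  if x/5 < t then 1
  else if x/5 = t then 1 + (3:ℝ)⁻¹^(t+1) * ψv ((x%5 + 5 - j) % 5)
  else if x/5 = t+1 then (3:ℝ)⁻¹^(t+1) * χv ((x%5 + 5 - (2*j+2)%5) % 5)
  else 0

noncomputable def φc (j x : ℕ) : ℝ :=
  if x/5 = 0 then χv ((x%5 + 5 - (j+2)%5)%5)
  else if x/5 = 1 then 1 + (3:ℝ)⁻¹ * hv ((x%5 + 5 - (2*j+4)%5)%5)
  else 1

-- numeric bounds
lemma ψ_bd (k : ℕ) : 0 ≤ ψv k ∧ ψv k ≤ 2 := by unfold ψv; split_ifs <;> norm_num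
lemma χ_bd (k : ℕ) : 0 ≤ χv k ∧ χv k ≤ 2 := by unfold χv; split_ifs <;> norm_num
lemma hv_bd (k : ℕ) : 0 ≤ hv k ∧ hv k ≤ 1 := by unfold hv; split_ifs <;> norm_num
lemma χ_adj (r : ℕ) (hr : r < 5) : χv r ≤ 1 + χv ((r+1)%5) ∧ χv ((r+1)%5) ≤ 1 + χv r := by
  interval_cases r <;> norm_num [χv]
lemma ψχ (r : ℕ) (hr : r < 5) : ψv r ≤ χv ((2*r+3)%5) := by
  interval_cases r <;> norm_num [ψv, χv]
lemma hχ (r : ℕ) (hr : r < 5) : hv ((2*r)%5) ≤ 3 * χv r := by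
  interval_cases r <;> norm_num [hv, χv]

lemma R_lt {m x y : ℕ} (h : R m x y) : x < y := by
  rcases h with ⟨_,h,_⟩|⟨_,h,_⟩|⟨_,h|h⟩|⟨_,h⟩ <;> omega

lemma wt_pos (x y : ℕ) : 0 < wt x y := by
  unfold wt w2; split_ifs <;> positivity

lemma wt_symm (x y : ℕ) : wt x y = wt y x := by
  unfold wt
  rcases Nat.lt_trichotomy x y with h|h|h
  · rw [if_pos h.le, if_neg (by omega)]
  · subst h; rfl
  · rw [if_neg (by omega), if_pos h.le]

lemma wt_cyc1 {x y : ℕ} (h1 : y = x+1) (h2 : x/5 = y/5) : wt x y = (3:ℝ)⁻¹^(x/5) := by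
  unfold wt w2; rw [if_pos (by omega), if_pos (Or.inl ⟨h1, h2⟩)]

lemma wt_cyc4 {x y : ℕ} (h1 : y = x+4) (h2 : x%5 = 0) : wt x y = (3:ℝ)⁻¹^(x/5) := by
  unfold wt w2; rw [if_pos (by omega), if_pos (Or.inr ⟨h1, h2⟩)]

lemma wt_chord {x y : ℕ} (h1 : y < 5) (h2 : y = x+2 ∨ y = x+3) : wt x y = 4 := by
  unfold wt w2; rw [if_pos (by omega), if_neg (by omega), if_pos ⟨h1, h2⟩]

lemma wt_cross {x y : ℕ} (h1 : y = 5*(x/5) + 5 + (2*(x%5))%5) : wt x y = 1 := by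
  unfold wt w2; rw [if_pos (by omega), if_neg (by omega), if_neg (by omega)]

-- φx evaluation
lemma φx_lt {t j x : ℕ} (h : x/5 < t) : φx t j x = 1 := by unfold φx; rw [if_pos h]
lemma φx_eq {t j x : ℕ} (h : x/5 = t) : φx t j x = 1 + (3:ℝ)⁻¹^(t+1) * ψv ((x%5 + 5 - j) % 5) := by
  unfold φx; rw [if_neg (by omega), if_pos h]
lemma φx_eq1 {t j x : ℕ} (h : x/5 = t+1) :
    φx t j x = (3:ℝ)⁻¹^(t+1) * χv ((x%5 + 5 - (2*j+2)%5) % 5) := by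
  unfold φx; rw [if_neg (by omega), if_neg (by omega), if_pos h]
lemma φx_gt {t j x : ℕ} (h : t+1 < x/5) : φx t j x = 0 := by
  unfold φx; rw [if_neg (by omega), if_neg (by omega), if_neg (by omega)]

lemma φc_0 {j x : ℕ} (h : x/5 = 0) : φc j x = χv ((x%5 + 5 - (j+2)%5)%5) := by
  unfold φc; rw [if_pos h]
lemma φc_1 {j x : ℕ} (h : x/5 = 1) : φc j x = 1 + (3:ℝ)⁻¹ * hv ((x%5 + 5 - (2*j+4)%5)%5) := by
  unfold φc; rw [if_neg (by omega), if_pos h]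
lemma φc_2 {j x : ℕ} (h : 2 ≤ x/5) : φc j x = 1 := by
  unfold φc; rw [if_neg (by omega), if_neg (by omega)]

lemma a_pos (t : ℕ) : (0:ℝ) < (3:ℝ)⁻¹^(t+1) := by positivity
lemma a_le (t : ℕ) : (3:ℝ)⁻¹^(t+1) ≤ 3⁻¹ := by
  calc (3:ℝ)⁻¹^(t+1) ≤ (3:ℝ)⁻¹^1 :=
        pow_le_pow_of_le_one (by norm_num) (by norm_num) (by omega)
  _ = 3⁻¹ := pow_one _

lemma pow_succ_3 (t : ℕ) : (3:ℝ)⁻¹^t = 3 * (3:ℝ)⁻¹^(t+1) := by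
  rw [pow_succ]; field_simp


-- appended to graph.lean content for testing
section TEST


set_option maxHeartbeats 1000000 in
lemma consRx_cyc1 {t j x y : ℕ} (hj : j < 5) (h1 : y = x + 1) (h2 : x/5 = y/5) :
    (φx t j x ≤ wt x y + φx t j y ∧ φx t j y ≤ wt x y + φx t j x) := by
  have ha := a_pos t
  have hale := a_le t
  have h3 := pow_succ_3 t
  · rw [wt_cyc1 h1 h2]
    rcases Nat.lt_trichotomy (x/5) t with hs | hs | hs
    · rw [φx_lt hs, φx_lt (by omega)]
      have : (0:ℝ) < (3:ℝ)⁻¹^(x/5) := by positivity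
      constructor <;> linarith
    · rw [φx_eq hs, φx_eq (by omega : y/5 = t), hs]
      have b1 := ψ_bd ((x%5 + 5 - j) % 5)
      have b2 := ψ_bd ((y%5 + 5 - j) % 5)
      constructor <;> nlinarith [h3]
    · rcases Nat.lt_trichotomy (x/5) (t+1) with hs' | hs' | hs'
      · omega
      · rw [φx_eq1 hs', φx_eq1 (by omega : y/5 = t+1), hs']
        have hr2 : (y%5 + 5 - (2*j+2)%5) % 5 = (((x%5 + 5 - (2*j+2)%5) % 5) + 1) % 5 := by omega
        have hadj := χ_adj ((x%5 + 5 - (2*j+2)%5) % 5) (by omega)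
        rw [← hr2] at hadj
        constructor <;> nlinarith [hadj.1, hadj.2, h3]
      · rw [φx_gt hs', φx_gt (by omega)]
        have : (0:ℝ) < (3:ℝ)⁻¹^(x/5) := by positivity
        constructor <;> linarith
set_option maxHeartbeats 1000000 in
lemma consRx_cyc4 {t j x y : ℕ} (hj : j < 5) (h1 : y = x + 4) (h2 : x % 5 = 0) :
    (φx t j x ≤ wt x y + φx t j y ∧ φx t j y ≤ wt x y + φx t j x) := by
  have ha := a_pos t
  have hale := a_le t
  have h3 := pow_succ_3 t
  have h2' : x/5 = y/5 := by omega
  · rw [wt_cyc4 h1 h2]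
    rcases Nat.lt_trichotomy (x/5) t with hs | hs | hs
    · rw [φx_lt hs, φx_lt (by omega)]
      have : (0:ℝ) < (3:ℝ)⁻¹^(x/5) := by positivity
      constructor <;> linarith
    · rw [φx_eq hs, φx_eq (by omega : y/5 = t), hs]
      have b1 := ψ_bd ((x%5 + 5 - j) % 5)
      have b2 := ψ_bd ((y%5 + 5 - j) % 5)
      constructor <;> nlinarith [h3]
    · rcases Nat.lt_trichotomy (x/5) (t+1) with hs' | hs' | hs'
      · omega
      · rw [φx_eq1 hs', φx_eq1 (by omega : y/5 = t+1), hs']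
        have hr2 : (x%5 + 5 - (2*j+2)%5) % 5 = (((y%5 + 5 - (2*j+2)%5) % 5) + 1) % 5 := by omega
        have hadj := χ_adj ((y%5 + 5 - (2*j+2)%5) % 5) (by omega)
        rw [← hr2] at hadj
        constructor <;> nlinarith [hadj.1, hadj.2, h3]
      · rw [φx_gt hs', φx_gt (by omega)]
        have : (0:ℝ) < (3:ℝ)⁻¹^(x/5) := by positivity
        constructor <;> linarith
set_option maxHeartbeats 1000000 in
lemma consRx_chord {t j x y : ℕ} (hj : j < 5) (hy : y < 5) (h2 : y = x+2 ∨ y = x+3) :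
    (φx t j x ≤ wt x y + φx t j y ∧ φx t j y ≤ wt x y + φx t j x) := by
  have ha := a_pos t
  have hale := a_le t
  have h3 := pow_succ_3 t
  · rw [wt_chord hy h2]
    rcases Nat.eq_zero_or_pos t with ht0 | ht0
    · subst ht0
      rw [φx_eq (by omega : x/5 = 0), φx_eq (by omega : y/5 = 0)]
      have b1 := ψ_bd ((x%5 + 5 - j) % 5)
      have b2 := ψ_bd ((y%5 + 5 - j) % 5)
      constructor <;> nlinarith [h3]
    · rw [φx_lt (by omega), φx_lt (by omega)]
      norm_num
set_option maxHeartbeats 1000000 in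
lemma consRx_cross {t j x y : ℕ} (hj : j < 5) (h1 : y = 5*(x/5) + 5 + (2*(x%5)) % 5) :
    (φx t j x ≤ wt x y + φx t j y ∧ φx t j y ≤ wt x y + φx t j x) := by
  have ha := a_pos t
  have hale := a_le t
  have h3 := pow_succ_3 t
  have hy5 : y/5 = x/5 + 1 := by omega
  have hym : y%5 = (2*(x%5))%5 := by omega
  · rw [wt_cross h1]
    rcases Nat.lt_trichotomy (x/5 + 1) t with hs | hs | hs
    · rw [φx_lt (by omega), φx_lt (by omega)]; norm_num
    · -- x one level below t
      rw [φx_lt (by omega), φx_eq (by omega : y/5 = t)]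
      have b2 := ψ_bd ((y%5 + 5 - j) % 5)
      constructor <;> nlinarith [h3]
    · rcases Nat.lt_trichotomy (x/5) t with hs' | hs' | hs'
      · omega
      · -- x at level t, y at level t+1
        rw [φx_eq hs', φx_eq1 (by omega : y/5 = t+1)]
        have hrc : (y%5 + 5 - (2*j+2)%5) % 5 = (2*((x%5 + 5 - j) % 5)+3)%5 := by omega
        rw [hrc]
        have hpc := ψχ ((x%5 + 5 - j) % 5) (by omega)
        have b1 := ψ_bd ((x%5 + 5 - j) % 5)
        have b2 := χ_bd ((2*((x%5 + 5 - j) % 5)+3)%5)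
        have e1 := mul_le_mul_of_nonneg_left hpc ha.le
        have e2 := mul_le_mul_of_nonneg_left b2.2 ha.le
        have e3 := mul_nonneg ha.le b1.1
        constructor <;> linarith
      · rcases Nat.lt_trichotomy (x/5) (t+1) with hs'' | hs'' | hs''
        · omega
        · -- x at level t+1, y above
          rw [φx_eq1 hs'', φx_gt (by omega)]
          have b1 := χ_bd ((x%5 + 5 - (2*j+2)%5) % 5)
          have e2 := mul_le_mul_of_nonneg_left b1.2 ha.le
          have e3 := mul_nonneg ha.le b1.1
          constructor <;> linarith
        · rw [φx_gt hs'', φx_gt (by omega)]; norm_num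


end TEST

lemma consRx {m t j : ℕ} (hj : j < 5) :
    ∀ x y, R m x y → (φx t j x ≤ wt x y + φx t j y ∧ φx t j y ≤ wt x y + φx t j x) := by
  intro x y hR
  rcases hR with ⟨hy, h1, h2⟩ | ⟨hy, h1, h2⟩ | ⟨hy, h2⟩ | ⟨hy, h1⟩
  · exact consRx_cyc1 hj h1 h2
  · exact consRx_cyc4 hj h1 h2
  · exact consRx_chord hj hy h2
  · exact consRx_cross hj h1

lemma consEx {m t j : ℕ} (hj : j < 5) :
    ∀ x y, Ed m x y → φx t j x ≤ wt x y + φx t j y := by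
  intro x y hE
  rcases hE with hR | hR
  · exact (consRx (m := m) hj x y hR).1
  · rw [wt_symm]
    exact (consRx (m := m) hj y x hR).2
set_option maxHeartbeats 1000000 in
lemma consRc_cyc1 {j x y : ℕ} (hj : j < 5) (h1 : y = x + 1) (h2 : x/5 = y/5) :
    (φc j x ≤ wt x y + φc j y ∧ φc j y ≤ wt x y + φc j x) := by
  rw [wt_cyc1 h1 h2]
  rcases Nat.lt_trichotomy (x/5) 1 with hs | hs | hs
  · have hs0 : x/5 = 0 := by omega
    rw [φc_0 hs0, φc_0 (by omega : y/5 = 0), hs0, pow_zero]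
    have hr2 : (y%5 + 5 - (j+2)%5) % 5 = (((x%5 + 5 - (j+2)%5) % 5) + 1) % 5 := by omega
    have hadj := χ_adj ((x%5 + 5 - (j+2)%5) % 5) (by omega)
    rw [← hr2] at hadj
    constructor <;> linarith [hadj.1, hadj.2]
  · rw [φc_1 hs, φc_1 (by omega : y/5 = 1), hs, pow_one]
    have b1 := hv_bd ((x%5 + 5 - (2*j+4)%5)%5)
    have b2 := hv_bd ((y%5 + 5 - (2*j+4)%5)%5)
    constructor <;> nlinarith
  · rw [φc_2 (by omega), φc_2 (by omega)]
    have : (0:ℝ) < (3:ℝ)⁻¹^(x/5) := by positivity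
    constructor <;> linarith

set_option maxHeartbeats 1000000 in
lemma consRc_cyc4 {j x y : ℕ} (hj : j < 5) (h1 : y = x + 4) (h2 : x % 5 = 0) :
    (φc j x ≤ wt x y + φc j y ∧ φc j y ≤ wt x y + φc j x) := by
  have h2' : x/5 = y/5 := by omega
  rw [wt_cyc4 h1 h2]
  rcases Nat.lt_trichotomy (x/5) 1 with hs | hs | hs
  · have hs0 : x/5 = 0 := by omega
    rw [φc_0 hs0, φc_0 (by omega : y/5 = 0), hs0, pow_zero]
    have hr2 : (x%5 + 5 - (j+2)%5) % 5 = (((y%5 + 5 - (j+2)%5) % 5) + 1) % 5 := by omega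
    have hadj := χ_adj ((y%5 + 5 - (j+2)%5) % 5) (by omega)
    rw [← hr2] at hadj
    constructor <;> linarith [hadj.1, hadj.2]
  · rw [φc_1 hs, φc_1 (by omega : y/5 = 1), hs, pow_one]
    have b1 := hv_bd ((x%5 + 5 - (2*j+4)%5)%5)
    have b2 := hv_bd ((y%5 + 5 - (2*j+4)%5)%5)
    constructor <;> nlinarith
  · rw [φc_2 (by omega), φc_2 (by omega)]
    have : (0:ℝ) < (3:ℝ)⁻¹^(x/5) := by positivity
    constructor <;> linarith

set_option maxHeartbeats 1000000 in
lemma consRc_chord {j x y : ℕ} (hj : j < 5) (hy : y < 5) (h2 : y = x+2 ∨ y = x+3) :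
    (φc j x ≤ wt x y + φc j y ∧ φc j y ≤ wt x y + φc j x) := by
  rw [wt_chord hy h2]
  rw [φc_0 (by omega : x/5 = 0), φc_0 (by omega : y/5 = 0)]
  have b1 := χ_bd ((x%5 + 5 - (j+2)%5)%5)
  have b2 := χ_bd ((y%5 + 5 - (j+2)%5)%5)
  constructor <;> linarith

set_option maxHeartbeats 1000000 in
lemma consRc_cross {j x y : ℕ} (hj : j < 5) (h1 : y = 5*(x/5) + 5 + (2*(x%5)) % 5) :
    (φc j x ≤ wt x y + φc j y ∧ φc j y ≤ wt x y + φc j x) := by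
  have hy5 : y/5 = x/5 + 1 := by omega
  have hym : y%5 = (2*(x%5))%5 := by omega
  rw [wt_cross h1]
  rcases Nat.lt_trichotomy (x/5) 1 with hs | hs | hs
  · have hs0 : x/5 = 0 := by omega
    rw [φc_0 hs0, φc_1 (by omega : y/5 = 1)]
    have hrc : (y%5 + 5 - (2*j+4)%5)%5 = (2*((x%5 + 5 - (j+2)%5)%5))%5 := by omega
    rw [hrc]
    have hhc := hχ ((x%5 + 5 - (j+2)%5)%5) (by omega)
    have b1 := χ_bd ((x%5 + 5 - (j+2)%5)%5)
    have b2 := hv_bd ((2*((x%5 + 5 - (j+2)%5)%5))%5)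
    constructor <;> nlinarith
  · rw [φc_1 hs, φc_2 (by omega : 2 ≤ y/5)]
    have b1 := hv_bd ((x%5 + 5 - (2*j+4)%5)%5)
    constructor <;> nlinarith
  · rw [φc_2 (by omega), φc_2 (by omega : 2 ≤ y/5)]
    norm_num

lemma consEc {m j : ℕ} (hj : j < 5) :
    ∀ x y, Ed m x y → φc j x ≤ wt x y + φc j y := by
  intro x y hE
  have H : ∀ u v, R m u v → (φc j u ≤ wt u v + φc j v ∧ φc j v ≤ wt u v + φc j u) := by
    intro u v hR
    rcases hR with ⟨hy, h1, h2⟩ | ⟨hy, h1, h2⟩ | ⟨hy, h2⟩ | ⟨hy, h1⟩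
    · exact consRc_cyc1 hj h1 h2
    · exact consRc_cyc4 hj h1 h2
    · exact consRc_chord hj hy h2
    · exact consRc_cross hj h1
  rcases hE with hR | hR
  · exact (H x y hR).1
  · rw [wt_symm]; exact (H y x hR).2
set_option maxHeartbeats 1600000 in
lemma strict_u {m t j : ℕ} (hj : j < 5) :
    ∀ b, Ed m (5*t+j) b → b ≠ 5*(t+1) + (2*j)%5 →
      φx t j (5*t+j) < wt (5*t+j) b + φx t j b := by
  intro b hE hne
  have ha := a_pos t
  have hale := a_le t
  have h3 := pow_succ_3 t
  have hu5 : (5*t+j)/5 = t := by omega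
  have huarg : ((5*t+j)%5 + 5 - j)%5 = 0 := by omega
  have hφu : φx t j (5*t+j) = 1 + (3:ℝ)⁻¹^(t+1) * 2 := by
    rw [φx_eq hu5, huarg]; norm_num [ψv]
  rcases hE with hR | hR
  · rcases hR with ⟨hb, h1, h2⟩ | ⟨hb, h1, h2⟩ | ⟨hb, h2⟩ | ⟨hb, h1⟩
    · -- up-cycle neighbour
      have hbarg : (b%5 + 5 - j)%5 = 1 := by omega
      rw [hφu, wt_cyc1 h1 h2, φx_eq (by omega : b/5 = t), hbarg, hu5, h3]
      norm_num [ψv]; try linarith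
    · -- wrap neighbour (j = 0)
      have hbarg : (b%5 + 5 - j)%5 = 4 := by omega
      rw [hφu, wt_cyc4 h1 h2, φx_eq (by omega : b/5 = t), hbarg, hu5, h3]
      norm_num [ψv]; try linarith
    · -- chord neighbour (t = 0)
      have ht0 : t = 0 := by omega
      rw [hφu, wt_chord hb h2, φx_eq (by omega : b/5 = t)]
      have := ψ_bd ((b%5 + 5 - j)%5)
      nlinarith
    · -- cross up: must be x1
      exact absurd (by omega) hne
  · have hlt := R_lt hR
    rw [wt_symm]
    rcases hR with ⟨hb, h1, h2⟩ | ⟨hb, h1, h2⟩ | ⟨hb, h2⟩ | ⟨hb, h1⟩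
    · -- down-cycle neighbour
      have hbarg : (b%5 + 5 - j)%5 = 4 := by omega
      rw [hφu, wt_cyc1 h1 h2, φx_eq (by omega : b/5 = t), hbarg, (by omega : b/5 = t), h3]
      norm_num [ψv]; try linarith
    · -- wrap neighbour (j = 4)
      have hbarg : (b%5 + 5 - j)%5 = 1 := by omega
      rw [hφu, wt_cyc4 h1 h2, φx_eq (by omega : b/5 = t), hbarg, (by omega : b/5 = t), h3]
      norm_num [ψv]; try linarith
    · -- chord
      have ht0 : t = 0 := by omega
      rw [hφu, wt_chord (by omega) h2, φx_eq (by omega : b/5 = t)]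
      have := ψ_bd ((b%5 + 5 - j)%5)
      nlinarith
    · -- cross down
      rw [hφu, wt_cross h1, φx_lt (by omega : b/5 < t)]
      linarith

set_option maxHeartbeats 1600000 in
lemma strict_x1 {m t j : ℕ} (hj : j < 5) :
    ∀ b, Ed m (5*(t+1) + (2*j)%5) b → b ≠ 5*(t+1) + (2*j+1)%5 →
      φx t j (5*(t+1) + (2*j)%5) < wt (5*(t+1) + (2*j)%5) b + φx t j b := by
  intro b hE hne
  have ha := a_pos t
  have hale := a_le t
  have hx5 : (5*(t+1) + (2*j)%5)/5 = t+1 := by omega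
  have hxarg : ((5*(t+1) + (2*j)%5)%5 + 5 - (2*j+2)%5)%5 = 3 := by omega
  have hφ : φx t j (5*(t+1) + (2*j)%5) = (3:ℝ)⁻¹^(t+1) * 2 := by
    rw [φx_eq1 hx5, hxarg]; norm_num [χv]
  rcases hE with hR | hR
  · rcases hR with ⟨hb, h1, h2⟩ | ⟨hb, h1, h2⟩ | ⟨hb, h2⟩ | ⟨hb, h1⟩
    · exact absurd (by omega) hne
    · -- wrap (pos 0, j = 0)
      have hbarg : (b%5 + 5 - (2*j+2)%5)%5 = 2 := by omega
      rw [hφ, wt_cyc4 h1 h2, φx_eq1 (by omega : b/5 = t+1), hbarg, hx5]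
      norm_num [χv]; try linarith
    · omega
    · -- cross up to level t+2
      rw [hφ, wt_cross h1, φx_gt (by omega : t+1 < b/5)]
      linarith
  · have hlt := R_lt hR
    rw [wt_symm]
    rcases hR with ⟨hb, h1, h2⟩ | ⟨hb, h1, h2⟩ | ⟨hb, h2⟩ | ⟨hb, h1⟩
    · -- down-cycle neighbour, pos (2j)%5 - 1
      have hbarg : (b%5 + 5 - (2*j+2)%5)%5 = 2 := by omega
      rw [hφ, wt_cyc1 h1 h2, φx_eq1 (by omega : b/5 = t+1), hbarg, (by omega : b/5 = t+1)]
      norm_num [χv]; try linarith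
    · -- wrap from pos 0; b would be x2
      exact absurd (by omega) hne
    · omega
    · -- cross down: b = u
      have hb5 : b/5 = t := by omega
      have hbm : b%5 = j := by omega
      have hbarg : (b%5 + 5 - j)%5 = 0 := by omega
      rw [hφ, wt_cross h1, φx_eq hb5, hbarg]
      norm_num [ψv]; try linarith

set_option maxHeartbeats 1600000 in
lemma strict_x2 {m t j : ℕ} (hj : j < 5) :
    ∀ b, Ed m (5*(t+1) + (2*j+1)%5) b → b ≠ 5*(t+1) + (2*j+2)%5 →
      φx t j (5*(t+1) + (2*j+1)%5) < wt (5*(t+1) + (2*j+1)%5) b + φx t j b := by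
  intro b hE hne
  have ha := a_pos t
  have hale := a_le t
  have hx5 : (5*(t+1) + (2*j+1)%5)/5 = t+1 := by omega
  have hxarg : ((5*(t+1) + (2*j+1)%5)%5 + 5 - (2*j+2)%5)%5 = 4 := by omega
  have hφ : φx t j (5*(t+1) + (2*j+1)%5) = (3:ℝ)⁻¹^(t+1) * 1 := by
    rw [φx_eq1 hx5, hxarg]; norm_num [χv]
  rcases hE with hR | hR
  · rcases hR with ⟨hb, h1, h2⟩ | ⟨hb, h1, h2⟩ | ⟨hb, h2⟩ | ⟨hb, h1⟩
    · exact absurd (by omega) hne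
    · -- wrap (pos 0, j = 2)
      have hbarg : (b%5 + 5 - (2*j+2)%5)%5 = 3 := by omega
      rw [hφ, wt_cyc4 h1 h2, φx_eq1 (by omega : b/5 = t+1), hbarg, hx5]
      norm_num [χv]; try linarith
    · omega
    · rw [hφ, wt_cross h1, φx_gt (by omega : t+1 < b/5)]
      linarith
  · have hlt := R_lt hR
    rw [wt_symm]
    rcases hR with ⟨hb, h1, h2⟩ | ⟨hb, h1, h2⟩ | ⟨hb, h2⟩ | ⟨hb, h1⟩
    · -- down-cycle: b = x1
      have hbarg : (b%5 + 5 - (2*j+2)%5)%5 = 3 := by omega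
      rw [hφ, wt_cyc1 h1 h2, φx_eq1 (by omega : b/5 = t+1), hbarg, (by omega : b/5 = t+1)]
      norm_num [χv]; try linarith
    · -- wrap from pos 0: b = v
      exact absurd (by omega) hne
    · omega
    · -- cross down: b = 5t + (j+3)%5
      have hb5 : b/5 = t := by omega
      have hbarg : (b%5 + 5 - j)%5 = 3 := by omega
      rw [hφ, wt_cross h1, φx_eq hb5, hbarg]
      norm_num [ψv]; try linarith

set_option maxHeartbeats 1600000 in
lemma strict_uc {m j : ℕ} (hj : j < 5) :
    ∀ b, Ed m j b → b ≠ (j+1)%5 → φc j j < wt j b + φc j b := by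
  intro b hE hne
  have hu5 : j/5 = 0 := by omega
  have huarg : (j%5 + 5 - (j+2)%5)%5 = 3 := by omega
  have hφu : φc j j = 2 := by rw [φc_0 hu5, huarg]; norm_num [χv]
  rcases hE with hR | hR
  · rcases hR with ⟨hb, h1, h2⟩ | ⟨hb, h1, h2⟩ | ⟨hb, h2⟩ | ⟨hb, h1⟩
    · exact absurd (by omega) hne
    · -- wrap: j = 0, b = 4
      have hbarg : (b%5 + 5 - (j+2)%5)%5 = 2 := by omega
      rw [hφu, wt_cyc4 h1 h2, φc_0 (by omega : b/5 = 0), hbarg, hu5]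
      norm_num [χv]
    · -- chords
      rw [hφu, wt_chord hb h2, φc_0 (by omega : b/5 = 0)]
      have := χ_bd ((b%5 + 5 - (j+2)%5)%5)
      linarith
    · -- cross up: the key strict edge
      have hb5 : b/5 = 1 := by omega
      have hbarg : (b%5 + 5 - (2*j+4)%5)%5 = 1 := by omega
      rw [hφu, wt_cross h1, φc_1 hb5, hbarg]
      norm_num [hv]
  · have hlt := R_lt hR
    rw [wt_symm]
    rcases hR with ⟨hb, h1, h2⟩ | ⟨hb, h1, h2⟩ | ⟨hb, h2⟩ | ⟨hb, h1⟩
    · -- b = j - 1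
      have hbarg : (b%5 + 5 - (j+2)%5)%5 = 2 := by omega
      rw [hφu, wt_cyc1 h1 h2, φc_0 (by omega : b/5 = 0), hbarg, (by omega : b/5 = 0)]
      norm_num [χv]
    · -- wrap: j = 4, b = 0 = successor
      exact absurd (by omega) hne
    · rw [hφu, wt_chord (by omega) h2, φc_0 (by omega : b/5 = 0)]
      have := χ_bd ((b%5 + 5 - (j+2)%5)%5)
      linarith
    · omega
  
set_option maxHeartbeats 1600000 in
lemma strict_x1c {m j : ℕ} (hj : j < 5) :
    ∀ b, Ed m ((j+1)%5) b → b ≠ (j+2)%5 → φc j ((j+1)%5) < wt ((j+1)%5) b + φc j b := by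
  intro b hE hne
  have hu5 : (j+1)%5/5 = 0 := by omega
  have huarg : ((j+1)%5%5 + 5 - (j+2)%5)%5 = 4 := by omega
  have hφu : φc j ((j+1)%5) = 1 := by rw [φc_0 hu5, huarg]; norm_num [χv]
  rcases hE with hR | hR
  · rcases hR with ⟨hb, h1, h2⟩ | ⟨hb, h1, h2⟩ | ⟨hb, h2⟩ | ⟨hb, h1⟩
    · exact absurd (by omega) hne
    · -- wrap: j = 4, x1' = 0, b = 4
      have hbarg : (b%5 + 5 - (j+2)%5)%5 = 3 := by omega
      rw [hφu, wt_cyc4 h1 h2, φc_0 (by omega : b/5 = 0), hbarg, hu5]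
      norm_num [χv]
    · rw [hφu, wt_chord hb h2, φc_0 (by omega : b/5 = 0)]
      have := χ_bd ((b%5 + 5 - (j+2)%5)%5)
      linarith
    · -- cross up
      have hb5 : b/5 = 1 := by omega
      rw [hφu, wt_cross h1, φc_1 hb5]
      have := hv_bd ((b%5 + 5 - (2*j+4)%5)%5)
      nlinarith
  · have hlt := R_lt hR
    rw [wt_symm]
    rcases hR with ⟨hb, h1, h2⟩ | ⟨hb, h1, h2⟩ | ⟨hb, h2⟩ | ⟨hb, h1⟩
    · -- b = j
      have hbarg : (b%5 + 5 - (j+2)%5)%5 = 3 := by omega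
      rw [hφu, wt_cyc1 h1 h2, φc_0 (by omega : b/5 = 0), hbarg, (by omega : b/5 = 0)]
      norm_num [χv]
    · -- wrap: j = 3, x1' = 4, b = 0 = successor
      exact absurd (by omega) hne
    · rw [hφu, wt_chord (by omega) h2, φc_0 (by omega : b/5 = 0)]
      have := χ_bd ((b%5 + 5 - (j+2)%5)%5)
      linarith
    · omega
lemma φx_nonneg (t j x : ℕ) : 0 ≤ φx t j x := by
  have h1 := ψ_bd ((x%5 + 5 - j) % 5)
  have h2 := χ_bd ((x%5 + 5 - (2*j+2)%5) % 5)
  have ha := a_pos t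
  unfold φx; split_ifs <;> nlinarith

lemma φc_nonneg (j x : ℕ) : 0 ≤ φc j x := by
  have h1 := χ_bd ((x%5 + 5 - (j+2)%5)%5)
  have h2 := hv_bd ((x%5 + 5 - (2*j+4)%5)%5)
  unfold φc; split_ifs <;> nlinarith

lemma Ed_symm {m x y : ℕ} (h : Ed m x y) : Ed m y x := h.symm

lemma Ed_cycpair {m s k : ℕ} (h5 : 5*(s+1) ≤ 5*m) (hk : k < 5) :
    Ed m (5*s+k) (5*s+(k+1)%5) := by unfold Ed R; omega

lemma wt_cycpair {s k : ℕ} (hk : k < 5) : wt (5*s+k) (5*s+(k+1)%5) = (3:ℝ)⁻¹^s := by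
  rcases Nat.lt_or_ge k 4 with hc | hc
  · rw [wt_cyc1 (by omega) (by omega), (show (5*s+k)/5 = s by omega)]
  · rw [wt_symm, wt_cyc4 (by omega) (by omega), (show (5*s+(k+1)%5)/5 = s by omega)]

lemma Ed_chordpair {m j : ℕ} (hj : j < 5) : Ed m j ((j+2)%5) := by unfold Ed R; omega

lemma wt_chordpair {j : ℕ} (hj : j < 5) : wt j ((j+2)%5) = 4 := by
  rcases Nat.lt_or_ge j 3 with hc | hc
  · rw [wt_chord (by omega) (Or.inl (by omega))]
  · rw [wt_symm, wt_chord (by omega) (Or.inr (by omega))]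

lemma Ed_crosspair {m t j : ℕ} (h5 : 5*(t+1)+5 ≤ 5*m) (hj : j < 5) :
    Ed m (5*t+j) (5*(t+1)+(2*j)%5) :=
  Or.inl (Or.inr (Or.inr (Or.inr ⟨by omega, by omega⟩)))

lemma crossval {t j : ℕ} (hj : j < 5) :
    5*(t+1)+(2*j)%5 = 5*((5*t+j)/5) + 5 + (2*((5*t+j)%5))%5 := by omega

lemma crossval2 {t j : ℕ} (hj : j < 5) :
    5*(t+1)+(2*j+2)%5 = 5*((5*t+(j+1)%5)/5) + 5 + (2*((5*t+(j+1)%5)%5))%5 := by omega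

end S11


set_option maxHeartbeats 3200000 in
/-- there is an absolute constant c > 0 and a family of n-node
positively weighted undirected graphs such that every positive symmetric
shortest-paths preserving reweighting has aspect ratio at least 2^(c n). -/
theorem stmt11 : ∃ c : ℝ, 0 < c ∧ ∀ n : ℕ, 5 ≤ n →
    ∃ (E : Fin n → Fin n → Prop) (w : Fin n → Fin n → ℝ),
      (∀ i j, E i j → E j i) ∧ (∀ i j, w i j = w j i) ∧
      (∀ i j, E i j → 0 < w i j) ∧
      ∀ wH : Fin n → Fin n → ℝ, (∀ i j, wH i j = wH j i) →
        (∀ i j, E i j → 0 < wH i j) →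
        (∀ p, IsShortestPath E wH p → IsShortestPath E w p) →
        ∃ i j k l, E i j ∧ E k l ∧ (2 : ℝ) ^ (c * (n : ℝ)) * wH k l ≤ wH i j := by
  classical
  refine ⟨1/9, by norm_num, ?_⟩
  intro n hn
  set m := n / 5 with hmdef
  have hm1 : 1 ≤ m := by omega
  have hm5 : 5*m ≤ n := by omega
  refine ⟨fun i j => S11.Ed m i.1 j.1, fun i j => S11.wt i.1 j.1,
    fun i j h => h.symm, fun i j => S11.wt_symm i.1 j.1,
    fun i j _ => S11.wt_pos i.1 j.1, ?_⟩
  intro wH hsymH hposH hpres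
  have hn0 : 0 < n := by omega
  set vf : ℕ → Fin n := fun x => ⟨x % n, Nat.mod_lt _ hn0⟩ with hvfdef
  have hvf : ∀ x, x < n → (vf x).1 = x := fun x hx => Nat.mod_eq_of_lt hx
  -- the cross-level constraints
  have hcrossC : ∀ t j, t + 2 ≤ m → j < 5 →
      wH (vf (5*t+j)) (vf (5*(t+1)+(2*j)%5)) +
      wH (vf (5*(t+1)+(2*j)%5)) (vf (5*(t+1)+(2*j+1)%5)) +
      wH (vf (5*(t+1)+(2*j+1)%5)) (vf (5*(t+1)+(2*j+2)%5)) ≤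
      wH (vf (5*t+j)) (vf (5*t+(j+1)%5)) + wH (vf (5*t+(j+1)%5)) (vf (5*(t+1)+(2*j+2)%5)) := by
    intro t j ht hj
    have hbu : 5*t+j < n := by omega
    have hbx1 : 5*(t+1)+(2*j)%5 < n := by omega
    have hbx2 : 5*(t+1)+(2*j+1)%5 < n := by omega
    have hbv : 5*(t+1)+(2*j+2)%5 < n := by omega
    have hby : 5*t+(j+1)%5 < n := by omega
    have hu := hvf _ hbu
    have hx1 := hvf _ hbx1
    have hx2 := hvf _ hbx2
    have hvv := hvf _ hbv
    have hy := hvf _ hby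
    have key := S11.constraint (E := fun i j : Fin n => S11.Ed m i.1 j.1)
        (w := fun i j : Fin n => S11.wt i.1 j.1) (wH := wH)
        (fun x y _ => S11.wt_pos x.1 y.1) hposH hpres
        (fun i => S11.φx t j i.1)
        (fun x y h => S11.consEx hj x.1 y.1 h)
        (fun x => S11.φx_nonneg t j x.1)
        (vf (5*(t+1)+(2*j+2)%5))
        (by show S11.φx t j (vf (5*(t+1)+(2*j+2)%5)).1 = 0
            rw [hvv, S11.φx_eq1 (by omega),
              (show ((5*(t+1)+(2*j+2)%5)%5 + 5 - (2*j+2)%5)%5 = 0 by omega)]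
            norm_num [S11.χv])
        [vf (5*t+j), vf (5*(t+1)+(2*j)%5), vf (5*(t+1)+(2*j+1)%5), vf (5*(t+1)+(2*j+2)%5)]
        ?_
        [vf (5*t+j), vf (5*t+(j+1)%5), vf (5*(t+1)+(2*j+2)%5)]
        ?_ rfl ?_
    · simp only [pathWeight] at key
      linarith [key]
    · -- the Chain certificate
      refine ⟨?_, ?_, ?_, ?_, ?_, ?_, ?_, ?_, ?_, ?_, ?_, ?_, rfl⟩
      · intro h
        have := congrArg Fin.val h
        rw [hu, hvv] at this
        omega
      · show S11.Ed m (vf (5*t+j)).1 (vf (5*(t+1)+(2*j)%5)).1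
        rw [hu, hx1]
        exact S11.Ed_crosspair (by omega) hj
      · show S11.φx t j (vf (5*t+j)).1 =
          S11.wt (vf (5*t+j)).1 (vf (5*(t+1)+(2*j)%5)).1 + S11.φx t j (vf (5*(t+1)+(2*j)%5)).1
        rw [hu, hx1]
        have hwt : S11.wt (5*t+j) (5*(t+1)+(2*j)%5) = 1 := S11.wt_cross (S11.crossval hj)
        rw [hwt, S11.φx_eq (by omega), S11.φx_eq1 (by omega),
          (show ((5*t+j)%5 + 5 - j)%5 = 0 by omega),
          (show ((5*(t+1)+(2*j)%5)%5 + 5 - (2*j+2)%5)%5 = 3 by omega)]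
        norm_num [S11.ψv, S11.χv]
      · intro b hEb hbne
        have hb1 : b.1 ≠ 5*(t+1)+(2*j)%5 := by
          intro h; exact hbne (Fin.ext (h.trans hx1.symm))
        have := S11.strict_u (m := m) hj b.1 (by rwa [hu] at hEb) hb1
        show S11.φx t j (vf (5*t+j)).1 < S11.wt (vf (5*t+j)).1 b.1 + S11.φx t j b.1
        rw [hu]; exact this
      · intro h
        have := congrArg Fin.val h
        rw [hx1, hvv] at this
        omega
      · show S11.Ed m (vf (5*(t+1)+(2*j)%5)).1 (vf (5*(t+1)+(2*j+1)%5)).1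
        rw [hx1, hx2, (show 5*(t+1)+(2*j+1)%5 = 5*(t+1)+((2*j)%5+1)%5 by omega)]
        exact S11.Ed_cycpair (by omega) (by omega)
      · show S11.φx t j (vf (5*(t+1)+(2*j)%5)).1 =
          S11.wt (vf (5*(t+1)+(2*j)%5)).1 (vf (5*(t+1)+(2*j+1)%5)).1 +
          S11.φx t j (vf (5*(t+1)+(2*j+1)%5)).1
        rw [hx1, hx2, (show 5*(t+1)+(2*j+1)%5 = 5*(t+1)+((2*j)%5+1)%5 by omega),
          S11.wt_cycpair (by omega), S11.φx_eq1 (by omega), S11.φx_eq1 (by omega),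
          (show ((5*(t+1)+(2*j)%5)%5 + 5 - (2*j+2)%5)%5 = 3 by omega),
          (show ((5*(t+1)+((2*j)%5+1)%5)%5 + 5 - (2*j+2)%5)%5 = 4 by omega)]
        norm_num [S11.χv]
        ring
      · intro b hEb hbne
        have hb1 : b.1 ≠ 5*(t+1)+(2*j+1)%5 := by
          intro h; exact hbne (Fin.ext (h.trans hx2.symm))
        have := S11.strict_x1 (m := m) hj b.1 (by rwa [hx1] at hEb) hb1
        show S11.φx t j (vf (5*(t+1)+(2*j)%5)).1 <
          S11.wt (vf (5*(t+1)+(2*j)%5)).1 b.1 + S11.φx t j b.1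
        rw [hx1]; exact this
      · intro h
        have := congrArg Fin.val h
        rw [hx2, hvv] at this
        omega
      · show S11.Ed m (vf (5*(t+1)+(2*j+1)%5)).1 (vf (5*(t+1)+(2*j+2)%5)).1
        rw [hx2, hvv, (show 5*(t+1)+(2*j+2)%5 = 5*(t+1)+((2*j+1)%5+1)%5 by omega)]
        exact S11.Ed_cycpair (by omega) (by omega)
      · show S11.φx t j (vf (5*(t+1)+(2*j+1)%5)).1 =
          S11.wt (vf (5*(t+1)+(2*j+1)%5)).1 (vf (5*(t+1)+(2*j+2)%5)).1 +
          S11.φx t j (vf (5*(t+1)+(2*j+2)%5)).1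
        rw [hx2, hvv, (show 5*(t+1)+(2*j+2)%5 = 5*(t+1)+((2*j+1)%5+1)%5 by omega),
          S11.wt_cycpair (by omega), S11.φx_eq1 (by omega), S11.φx_eq1 (by omega),
          (show ((5*(t+1)+(2*j+1)%5)%5 + 5 - (2*j+2)%5)%5 = 4 by omega),
          (show ((5*(t+1)+((2*j+1)%5+1)%5)%5 + 5 - (2*j+2)%5)%5 = 0 by omega)]
        norm_num [S11.χv]
      · intro b hEb hbne
        have hb1 : b.1 ≠ 5*(t+1)+(2*j+2)%5 := by
          intro h; exact hbne (Fin.ext (h.trans hvv.symm))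
        have := S11.strict_x2 (m := m) hj b.1 (by rwa [hx2] at hEb) hb1
        show S11.φx t j (vf (5*(t+1)+(2*j+1)%5)).1 <
          S11.wt (vf (5*(t+1)+(2*j+1)%5)).1 b.1 + S11.φx t j b.1
        rw [hx2]; exact this
    · -- Q is a path
      refine ⟨?_, ?_, trivial⟩
      · show S11.Ed m (vf (5*t+j)).1 (vf (5*t+(j+1)%5)).1
        rw [hu, hy]
        exact S11.Ed_cycpair (by omega) hj
      · show S11.Ed m (vf (5*t+(j+1)%5)).1 (vf (5*(t+1)+(2*j+2)%5)).1
        rw [hy, hvv]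
        exact Or.inl (Or.inr (Or.inr (Or.inr ⟨by omega, S11.crossval2 hj⟩)))
    · rfl
  -- the chord constraints
  have hchordC : ∀ j, j < 5 →
      wH (vf j) (vf ((j+1)%5)) + wH (vf ((j+1)%5)) (vf ((j+2)%5)) ≤
      wH (vf j) (vf ((j+2)%5)) := by
    intro j hj
    have hbu : j < n := by omega
    have hbx1 : (j+1)%5 < n := by omega
    have hbv : (j+2)%5 < n := by omega
    have hu := hvf _ hbu
    have hx1 := hvf _ hbx1
    have hvv := hvf _ hbv
    have key := S11.constraint (E := fun i j : Fin n => S11.Ed m i.1 j.1)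
        (w := fun i j : Fin n => S11.wt i.1 j.1) (wH := wH)
        (fun x y _ => S11.wt_pos x.1 y.1) hposH hpres
        (fun i => S11.φc j i.1)
        (fun x y h => S11.consEc hj x.1 y.1 h)
        (fun x => S11.φc_nonneg j x.1)
        (vf ((j+2)%5))
        (by show S11.φc j (vf ((j+2)%5)).1 = 0
            rw [hvv, S11.φc_0 (by omega),
              (show ((j+2)%5%5 + 5 - (j+2)%5)%5 = 0 by omega)]
            norm_num [S11.χv])
        [vf j, vf ((j+1)%5), vf ((j+2)%5)]
        ?_
        [vf j, vf ((j+2)%5)]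
        ?_ rfl ?_
    · simp only [pathWeight] at key
      linarith [key]
    · refine ⟨?_, ?_, ?_, ?_, ?_, ?_, ?_, ?_, rfl⟩
      · intro h
        have := congrArg Fin.val h
        rw [hu, hvv] at this
        omega
      · show S11.Ed m (vf j).1 (vf ((j+1)%5)).1
        rw [hu, hx1]
        have := S11.Ed_cycpair (m := m) (s := 0) (k := j) (by omega) hj
        simpa using this
      · show S11.φc j (vf j).1 = S11.wt (vf j).1 (vf ((j+1)%5)).1 + S11.φc j (vf ((j+1)%5)).1
        rw [hu, hx1]
        have hwt : S11.wt j ((j+1)%5) = 1 := by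
          have := S11.wt_cycpair (s := 0) (k := j) hj
          simpa using this
        rw [hwt, S11.φc_0 (by omega), S11.φc_0 (by omega),
          (show (j%5 + 5 - (j+2)%5)%5 = 3 by omega),
          (show ((j+1)%5%5 + 5 - (j+2)%5)%5 = 4 by omega)]
        norm_num [S11.χv]
      · intro b hEb hbne
        have hb1 : b.1 ≠ (j+1)%5 := by
          intro h; exact hbne (Fin.ext (h.trans hx1.symm))
        have := S11.strict_uc (m := m) hj b.1 (by rwa [hu] at hEb) hb1
        show S11.φc j (vf j).1 < S11.wt (vf j).1 b.1 + S11.φc j b.1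
        rw [hu]; exact this
      · intro h
        have := congrArg Fin.val h
        rw [hx1, hvv] at this
        omega
      · show S11.Ed m (vf ((j+1)%5)).1 (vf ((j+2)%5)).1
        rw [hx1, hvv, (show (j+2)%5 = ((j+1)%5+1)%5 by omega)]
        have := S11.Ed_cycpair (m := m) (s := 0) (k := (j+1)%5) (by omega) (by omega)
        simpa using this
      · show S11.φc j (vf ((j+1)%5)).1 =
          S11.wt (vf ((j+1)%5)).1 (vf ((j+2)%5)).1 + S11.φc j (vf ((j+2)%5)).1
        rw [hx1, hvv]
        have hwt : S11.wt ((j+1)%5) ((j+2)%5) = 1 := by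
          have := S11.wt_cycpair (s := 0) (k := (j+1)%5) (by omega)
          rw [(show (j+2)%5 = ((j+1)%5+1)%5 by omega)]
          simpa using this
        rw [hwt, S11.φc_0 (by omega), S11.φc_0 (by omega),
          (show ((j+1)%5%5 + 5 - (j+2)%5)%5 = 4 by omega),
          (show ((j+2)%5%5 + 5 - (j+2)%5)%5 = 0 by omega)]
        norm_num [S11.χv]
      · intro b hEb hbne
        have hb1 : b.1 ≠ (j+2)%5 := by
          intro h; exact hbne (Fin.ext (h.trans hvv.symm))
        have := S11.strict_x1c (m := m) hj b.1 (by rwa [hx1] at hEb) hb1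
        show S11.φc j (vf ((j+1)%5)).1 < S11.wt (vf ((j+1)%5)).1 b.1 + S11.φc j b.1
        rw [hx1]; exact this
    · refine ⟨?_, trivial⟩
      show S11.Ed m (vf j).1 (vf ((j+2)%5)).1
      rw [hu, hvv]
      exact S11.Ed_chordpair hj
    · rfl
  -- total cycle weights
  set G : ℕ → ℝ := fun s =>
    wH (vf (5*s)) (vf (5*s+1)) + wH (vf (5*s+1)) (vf (5*s+2)) +
    wH (vf (5*s+2)) (vf (5*s+3)) + wH (vf (5*s+3)) (vf (5*s+4)) +
    wH (vf (5*s+4)) (vf (5*s)) with hG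
  have hstep : ∀ s, s+2 ≤ m → 2 * G (s+1) ≤ G s := by
    intro s hs
    have c0 := hcrossC s 0 hs (by norm_num)
    have c1 := hcrossC s 1 hs (by norm_num)
    have c2 := hcrossC s 2 hs (by norm_num)
    have c3 := hcrossC s 3 hs (by norm_num)
    have c4 := hcrossC s 4 hs (by norm_num)
    simp only [hG]
    norm_num at c0 c1 c2 c3 c4 ⊢
    linarith
  have hdecay : ∀ s, s+1 ≤ m → 2^s * G s ≤ G 0 := by
    intro s
    induction s with
    | zero => intro _; simp
    | succ k ih =>
      intro hk1
      have h1 := hstep k (by omega)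
      have h2 := ih (by omega)
      have hnn : (0:ℝ) ≤ 2^k := by positivity
      calc (2:ℝ)^(k+1) * G (k+1) = 2^k * (2 * G (k+1)) := by ring
      _ ≤ 2^k * G k := mul_le_mul_of_nonneg_left h1 hnn
      _ ≤ G 0 := h2
  have hdec := hdecay (m-1) (by omega)
  -- chord sum
  have d0 := hchordC 0 (by norm_num)
  have d1 := hchordC 1 (by norm_num)
  have d2 := hchordC 2 (by norm_num)
  have d3 := hchordC 3 (by norm_num)
  have d4 := hchordC 4 (by norm_num)
  norm_num at d0 d1 d2 d3 d4
  have hmax5 : 2 * G 0 ≤ wH (vf 0) (vf 2) + wH (vf 1) (vf 3) + wH (vf 2) (vf 4) +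
      wH (vf 3) (vf 0) + wH (vf 4) (vf 1) := by
    simp only [hG]
    norm_num
    linarith
  have hpick : ∃ x y : ℕ, x < n ∧ y < n ∧ S11.Ed m x y ∧ (2/5) * G 0 ≤ wH (vf x) (vf y) := by
    by_contra hcon
    push_neg at hcon
    have ed0 : S11.Ed m 0 2 := by have := S11.Ed_chordpair (m := m) (j := 0) (by norm_num); simpa using this
    have ed1 : S11.Ed m 1 3 := by have := S11.Ed_chordpair (m := m) (j := 1) (by norm_num); simpa using this
    have ed2 : S11.Ed m 2 4 := by have := S11.Ed_chordpair (m := m) (j := 2) (by norm_num); simpa using this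
    have ed3 : S11.Ed m 3 0 := by have := S11.Ed_chordpair (m := m) (j := 3) (by norm_num); simpa using this
    have ed4 : S11.Ed m 4 1 := by have := S11.Ed_chordpair (m := m) (j := 4) (by norm_num); simpa using this
    have e0 := hcon 0 2 (by omega) (by omega) ed0
    have e1 := hcon 1 3 (by omega) (by omega) ed1
    have e2 := hcon 2 4 (by omega) (by omega) ed2
    have e3 := hcon 3 0 (by omega) (by omega) ed3
    have e4 := hcon 4 1 (by omega) (by omega) ed4
    linarith
  have hpick2 : ∃ x y : ℕ, x < n ∧ y < n ∧ S11.Ed m x y ∧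
      wH (vf x) (vf y) ≤ (1/5) * G (m-1) := by
    by_contra hcon
    push_neg at hcon
    have hedge : ∀ k, k < 5 → S11.Ed m (5*(m-1)+k) (5*(m-1)+(k+1)%5) :=
      fun k hk => S11.Ed_cycpair (by omega) hk
    have e0 := hcon (5*(m-1)) (5*(m-1)+1) (by omega) (by omega)
      (by have := hedge 0 (by norm_num); simpa using this)
    have e1 := hcon (5*(m-1)+1) (5*(m-1)+2) (by omega) (by omega)
      (by have := hedge 1 (by norm_num); simpa using this)
    have e2 := hcon (5*(m-1)+2) (5*(m-1)+3) (by omega) (by omega)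
      (by have := hedge 2 (by norm_num); simpa using this)
    have e3 := hcon (5*(m-1)+3) (5*(m-1)+4) (by omega) (by omega)
      (by have := hedge 3 (by norm_num); simpa using this)
    have e4 := hcon (5*(m-1)+4) (5*(m-1)) (by omega) (by omega)
      (by have := hedge 4 (by norm_num); simpa using this)
    have hGm : G (m-1) = wH (vf (5*(m-1))) (vf (5*(m-1)+1)) + wH (vf (5*(m-1)+1)) (vf (5*(m-1)+2)) +
      wH (vf (5*(m-1)+2)) (vf (5*(m-1)+3)) + wH (vf (5*(m-1)+3)) (vf (5*(m-1)+4)) +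
      wH (vf (5*(m-1)+4)) (vf (5*(m-1))) := rfl
    linarith [hGm ▸ e0]
  obtain ⟨p, q, hp, hq, hpqE, hge⟩ := hpick
  obtain ⟨r, s', hr, hs, hrsE, hle⟩ := hpick2
  refine ⟨vf p, vf q, vf r, vf s', ?_, ?_, ?_⟩
  · show S11.Ed m (vf p).1 (vf q).1
    rw [hvf _ hp, hvf _ hq]; exact hpqE
  · show S11.Ed m (vf r).1 (vf s').1
    rw [hvf _ hr, hvf _ hs]; exact hrsE
  · have hposrs : 0 < wH (vf r) (vf s') := by
      apply hposH
      show S11.Ed m (vf r).1 (vf s').1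
      rw [hvf _ hr, hvf _ hs]; exact hrsE
    have h2m : (2:ℝ)^((1/9 : ℝ) * n) ≤ (2:ℝ)^(m:ℕ) := by
      rw [show ((2:ℝ)^(m:ℕ) : ℝ) = (2:ℝ)^((m:ℕ):ℝ) from (Real.rpow_natCast 2 m).symm]
      apply Real.rpow_le_rpow_of_exponent_le (by norm_num)
      have h9 : (n:ℝ) ≤ 9*(m:ℝ) := by exact_mod_cast (show n ≤ 9*m by omega)
      linarith
    have hpw : (2:ℝ)^m = 2 * 2^(m-1) := by
      conv_lhs => rw [show m = (m-1)+1 by omega]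
      rw [pow_succ]; ring
    have step1 : (2:ℝ)^((1/9 : ℝ) * n) * wH (vf r) (vf s') ≤ 2^(m:ℕ) * wH (vf r) (vf s') :=
      mul_le_mul_of_nonneg_right h2m hposrs.le
    have step2 : (2:ℝ)^(m:ℕ) * wH (vf r) (vf s') ≤ 2^(m:ℕ) * ((1/5) * G (m-1)) :=
      mul_le_mul_of_nonneg_left hle (by positivity)
    have step3 : (2:ℝ)^(m:ℕ) * ((1/5) * G (m-1)) ≤ (2/5) * G 0 := by
      rw [hpw]
      have h25 := mul_le_mul_of_nonneg_left hdec (by norm_num : (0:ℝ) ≤ 2/5)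
      linarith
    linarith
end

section
/- If every directed graph on n nodes with positive edge weights admits a shortest-paths preserving reweighting of aspect ratio at most α(n), then every undirected graph on n nodes with positive edge weights admits a shortest-paths preserving reweighting of aspect ratio at most α(n). (Reduction: bidirect each undirected edge, reweight, then recombine each pair of antiparallel directed edges into a single undirected edge whose weight is the sum of the two directed weights; this does not increase the aspect ratio and preserves shortest paths.) -/
section Lists
variable {V : Type} {E : V → V → Prop} {ω : V → V → ℝ}

@[simp] lemma pathWeight_nil (w : V → V → ℝ) : pathWeight w [] = 0 := rfl
@[simp] lemma pathWeight_single (w : V → V → ℝ) (a : V) : pathWeight w [a] = 0 := rfl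
@[simp] lemma pathWeight_cons_cons (w : V → V → ℝ) (a b : V) (l : List V) :
    pathWeight w (a :: b :: l) = w a b + pathWeight w (b :: l) := rfl

@[simp] lemma isPath_nil : IsPath E ([] : List V) ↔ False := Iff.rfl
@[simp] lemma isPath_single (a : V) : IsPath E [a] := trivial
@[simp] lemma isPath_cons_cons (a b : V) (l : List V) :
    IsPath E (a :: b :: l) ↔ E a b ∧ IsPath E (b :: l) := Iff.rfl

lemma IsPath.ne_nil {l : List V} (h : IsPath E l) : l ≠ [] := by
  cases l <;> simp_all [IsPath]

lemma pathWeight_append_cons (w : V → V → ℝ) (xs : List V) (y : V) (ys : List V) :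
    pathWeight w (xs ++ y :: ys) = pathWeight w (xs ++ [y]) + pathWeight w (y :: ys) := by
  induction xs with
  | nil => simp
  | cons a xs ih =>
    cases xs with
    | nil => cases ys <;> simp [pathWeight]
    | cons b xs => simp only [List.cons_append, pathWeight_cons_cons] at *; rw [ih]; ring

lemma isPath_append_cons (xs : List V) (y : V) (ys : List V) :
    IsPath E (xs ++ y :: ys) ↔ IsPath E (xs ++ [y]) ∧ IsPath E (y :: ys) := by
  induction xs with
  | nil => cases ys <;> simp [IsPath]
  | cons a xs ih =>
    cases xs with
    | nil => cases ys <;> simp [IsPath]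
    | cons b xs => simp only [List.cons_append, isPath_cons_cons] at *; rw [ih]; tauto

lemma pathWeight_nonneg {l : List V} (hl : IsPath E l)
    (hω : ∀ i j, E i j → 0 ≤ ω i j) : 0 ≤ pathWeight ω l := by
  induction l with
  | nil => simp
  | cons a t ih =>
    cases t with
    | nil => simp
    | cons b t =>
      rw [isPath_cons_cons] at hl
      have := hω a b hl.1
      have := ih hl.2
      simp only [pathWeight_cons_cons]; linarith

lemma pathWeight_pos {l : List V} (hl : IsPath E l) (hlen : 2 ≤ l.length)
    (hω : ∀ i j, E i j → 0 < ω i j) : 0 < pathWeight ω l := by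
  match l, hlen with
  | a :: b :: t, _ =>
    rw [isPath_cons_cons] at hl
    have h1 := hω a b hl.1
    have h2 := pathWeight_nonneg hl.2 (fun i j h => (hω i j h).le)
    simp only [pathWeight_cons_cons]; linarith

end Lists

section Lists2
variable {V : Type} {E : V → V → Prop} {ω : V → V → ℝ}

lemma pathWeight_reverse (w : V → V → ℝ) (l : List V) :
    pathWeight w l.reverse = pathWeight (fun i j => w j i) l := by
  induction l with
  | nil => simp
  | cons a t ih =>
    cases t with
    | nil => simp
    | cons b t =>
      have h1 : (a :: b :: t).reverse = t.reverse ++ b :: [a] := by simp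
      have h2 : (b :: t).reverse = t.reverse ++ [b] := by simp
      rw [h1, pathWeight_append_cons, ← h2, ih]
      simp only [pathWeight_cons_cons, pathWeight_single]
      ring

lemma isPath_reverse (hE : ∀ i j, E i j → E j i) {l : List V} (hl : IsPath E l) :
    IsPath E l.reverse := by
  induction l with
  | nil => simp_all
  | cons a t ih =>
    cases t with
    | nil => simp
    | cons b t =>
      rw [isPath_cons_cons] at hl
      have h1 : (a :: b :: t).reverse = t.reverse ++ b :: [a] := by simp
      have h2 : (b :: t).reverse = t.reverse ++ [b] := by simp
      rw [h1, isPath_append_cons, ← h2]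
      exact ⟨ih hl.2, hE a b hl.1, trivial⟩

lemma pathWeight_add (w₁ w₂ : V → V → ℝ) (l : List V) :
    pathWeight (fun i j => w₁ i j + w₂ i j) l = pathWeight w₁ l + pathWeight w₂ l := by
  induction l with
  | nil => simp
  | cons a t ih =>
    cases t with
    | nil => simp
    | cons b t => simp only [pathWeight_cons_cons] at *; rw [ih]; ring

lemma pathWeight_smul (c : ℝ) (w : V → V → ℝ) (l : List V) :
    pathWeight (fun i j => c * w i j) l = c * pathWeight w l := by
  induction l with
  | nil => simp
  | cons a t ih =>
    cases t with
    | nil => simp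
    | cons b t => simp only [pathWeight_cons_cons] at *; rw [ih]; ring

/-- duplicate decomposition -/
lemma exists_dup_decomp {l : List V} (h : ¬ l.Nodup) :
    ∃ (l₁ : List V) (v : V) (l₂ l₃ : List V), l = l₁ ++ v :: l₂ ++ v :: l₃ := by
  induction l with
  | nil => simp at h
  | cons a t ih =>
    by_cases ha : a ∈ t
    · obtain ⟨s, u, rfl⟩ := List.append_of_mem ha
      exact ⟨[], a, s, u, by simp⟩
    · have : ¬ t.Nodup := fun hn => h (List.nodup_cons.mpr ⟨ha, hn⟩)
      obtain ⟨l₁, v, l₂, l₃, rfl⟩ := ih this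
      exact ⟨a :: l₁, v, l₂, l₃, by simp⟩

/-- one surgery step -/
lemma surgery {l₁ l₂ l₃ : List V} {v : V}
    (hp : IsPath E (l₁ ++ v :: l₂ ++ v :: l₃)) :
    IsPath E (l₁ ++ v :: l₃) ∧
    (l₁ ++ v :: l₃).head? = (l₁ ++ v :: l₂ ++ v :: l₃).head? ∧
    (l₁ ++ v :: l₃).getLast? = (l₁ ++ v :: l₂ ++ v :: l₃).getLast? ∧
    (l₁ ++ v :: l₃).length < (l₁ ++ v :: l₂ ++ v :: l₃).length ∧
    ∀ w : V → V → ℝ, (∀ i j, E i j → 0 ≤ w i j) →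
      pathWeight w (l₁ ++ v :: l₃) ≤ pathWeight w (l₁ ++ v :: l₂ ++ v :: l₃) ∧
      ((∀ i j, E i j → 0 < w i j) →
        pathWeight w (l₁ ++ v :: l₃) < pathWeight w (l₁ ++ v :: l₂ ++ v :: l₃)) := by
  have hsplit : l₁ ++ v :: l₂ ++ v :: l₃ = l₁ ++ v :: (l₂ ++ v :: l₃) := by simp
  rw [hsplit] at hp ⊢
  rw [isPath_append_cons] at hp
  have hp2 : IsPath E (v :: (l₂ ++ v :: l₃)) := hp.2
  have hp2' : IsPath E ((v :: l₂) ++ v :: l₃) := by simpa using hp2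
  rw [isPath_append_cons] at hp2'
  refine ⟨?_, ?_, ?_, ?_, ?_⟩
  · rw [isPath_append_cons]; exact ⟨hp.1, hp2'.2⟩
  · cases l₁ <;> simp
  · rw [List.getLast?_append_cons, List.getLast?_append_cons]
    have : (v :: (l₂ ++ v :: l₃)) = ((v :: l₂) ++ v :: l₃) := by simp
    rw [this, List.getLast?_append_cons]
  · simp
  · intro w hw
    have key : pathWeight w (l₁ ++ v :: (l₂ ++ v :: l₃)) =
        pathWeight w (l₁ ++ v :: l₃) + pathWeight w ((v :: l₂) ++ [v]) := by
      rw [pathWeight_append_cons w l₁ v (l₂ ++ v :: l₃),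
          pathWeight_append_cons w l₁ v l₃]
      have : pathWeight w (v :: (l₂ ++ v :: l₃)) =
          pathWeight w ((v :: l₂) ++ v :: l₃) := by simp
      rw [this, pathWeight_append_cons w (v :: l₂) v l₃]
      ring
    have hcyc : IsPath E ((v :: l₂) ++ [v]) := hp2'.1
    have h0 : 0 ≤ pathWeight w ((v :: l₂) ++ [v]) := pathWeight_nonneg hcyc hw
    constructor
    · linarith [key]
    · intro hpos
      have : 0 < pathWeight w ((v :: l₂) ++ [v]) :=
        pathWeight_pos hcyc (by simp) hpos
      linarith [key]

end Lists2
section Lists3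
variable {V : Type} {E : V → V → Prop}

/-- Every path can be reduced to a nodup path with the same endpoints that is no
heavier under any nonnegative weighting. -/
lemma exists_nodup_path {q : List V} (hq : IsPath E q) :
    ∃ q' : List V, IsPath E q' ∧ q'.Nodup ∧ q'.head? = q.head? ∧
      q'.getLast? = q.getLast? ∧
      ∀ w : V → V → ℝ, (∀ i j, E i j → 0 ≤ w i j) →
        pathWeight w q' ≤ pathWeight w q := by
  generalize hlen : q.length = N
  induction N using Nat.strong_induction_on generalizing q with
  | _ N ih =>
    by_cases hnd : q.Nodup
    · exact ⟨q, hq, hnd, rfl, rfl, fun w hw => le_refl _⟩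
    · obtain ⟨l₁, v, l₂, l₃, rfl⟩ := exists_dup_decomp hnd
      obtain ⟨hp', hh', hl', hlen', hw'⟩ := surgery (E := E) hq
      subst hlen
      obtain ⟨q', h1, h2, h3, h4, h5⟩ := ih _ hlen' hp' rfl
      exact ⟨q', h1, h2, h3.trans hh', h4.trans hl',
        fun w hw => (h5 w hw).trans ((hw' w hw).1)⟩

/-- A shortest path under strictly positive weights has no duplicates. -/
lemma IsShortestPath.nodup {w : V → V → ℝ} {p : List V}
    (hpos : ∀ i j, E i j → 0 < w i j) (hp : IsShortestPath E w p) : p.Nodup := by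
  by_contra hnd
  obtain ⟨l₁, v, l₂, l₃, rfl⟩ := exists_dup_decomp hnd
  obtain ⟨hp', hh', hl', _, hw'⟩ := surgery (E := E) hp.1
  have hlt := (hw' w (fun i j h => (hpos i j h).le)).2 hpos
  have := hp.2 _ hp' hh' hl'
  linarith

/-- Reversal of a shortest path under a symmetric weighting is shortest. -/
lemma IsShortestPath.reverse {w : V → V → ℝ} {p : List V}
    (hE : ∀ i j, E i j → E j i) (hw : ∀ i j, w i j = w j i)
    (hp : IsShortestPath E w p) : IsShortestPath E w p.reverse := by
  have hwrev : ∀ l : List V, pathWeight w l.reverse = pathWeight w l := by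
    intro l
    rw [pathWeight_reverse]
    congr 1
    funext i j
    exact (hw i j).symm
  refine ⟨isPath_reverse hE hp.1, fun q hq hh hl => ?_⟩
  rw [← hwrev q]
  have h2 := hwrev p
  have h3 := hp.2 q.reverse (isPath_reverse hE hq)
    (by rw [List.head?_reverse, hl, List.getLast?_reverse])
    (by rw [List.getLast?_reverse, hh, List.head?_reverse])
  linarith

end Lists3

section Exists
variable {n : ℕ} {E : Fin n → Fin n → Prop}

/-- Existence of shortest paths (finite vertex set, positive weights). -/
lemma exists_shortest {w : Fin n → Fin n → ℝ} (hpos : ∀ i j, E i j → 0 < w i j)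
    {p : List (Fin n)} (hp : IsPath E p) :
    ∃ s : List (Fin n), IsShortestPath E w s ∧ s.head? = p.head? ∧
      s.getLast? = p.getLast? := by
  classical
  set S : Set (List (Fin n)) :=
    {l | IsPath E l ∧ l.Nodup ∧ l.head? = p.head? ∧ l.getLast? = p.getLast?} with hS
  have hfin : S.Finite := by
    apply (List.finite_length_le (Fin n) n).subset
    rintro l ⟨-, hnd, -, -⟩
    simpa using hnd.length_le_card
  have hne : S.Nonempty := by
    obtain ⟨q', h1, h2, h3, h4, _⟩ := exists_nodup_path hp
    exact ⟨q', h1, h2, h3, h4⟩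
  obtain ⟨s, hsS, hmin⟩ := Set.exists_min_image S (pathWeight w) hfin hne
  obtain ⟨hs1, hs2, hs3, hs4⟩ := hsS
  refine ⟨s, ⟨hs1, fun q hq hh hl => ?_⟩, hs3, hs4⟩
  obtain ⟨q', h1, h2, h3, h4, h5⟩ := exists_nodup_path hq
  have hq'S : q' ∈ S := ⟨h1, h2, by rw [h3, hh, hs3], by rw [h4, hl, hs4]⟩
  exact (hmin q' hq'S).trans (h5 w (fun i j h => (hpos i j h).le))

end Exists
section Enc
variable {n : ℕ}

/-- injective code of an unordered pair -/
def enc (i j : Fin n) : ℕ := min i.val j.val * n + max i.val j.val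

lemma enc_comm (i j : Fin n) : enc i j = enc j i := by
  unfold enc; rw [min_comm, max_comm]

lemma enc_eq_iff {i j k l : Fin n} (h : enc i j = enc k l) :
    (i = k ∧ j = l) ∨ (i = l ∧ j = k) := by
  unfold enc at h
  have hn : 0 < n := i.pos
  have hb1 : max i.val j.val < n := by have := i.isLt; have := j.isLt; omega
  have hb2 : max k.val l.val < n := by have := k.isLt; have := l.isLt; omega
  have h1 : max i.val j.val = max k.val l.val := by
    have e1 : (min i.val j.val * n + max i.val j.val) % n = max i.val j.val := by
      rw [mul_comm, Nat.mul_add_mod]; exact Nat.mod_eq_of_lt hb1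
    have e2 : (min k.val l.val * n + max k.val l.val) % n = max k.val l.val := by
      rw [mul_comm, Nat.mul_add_mod]; exact Nat.mod_eq_of_lt hb2
    rw [← e1, ← e2, h]
  have h2 : min i.val j.val * n = min k.val l.val * n := by omega
  have h3 : min i.val j.val = min k.val l.val := Nat.eq_of_mul_eq_mul_right hn h2
  have : (i.val = k.val ∧ j.val = l.val) ∨ (i.val = l.val ∧ j.val = k.val) := by omega
  rcases this with ⟨ha, hb⟩ | ⟨ha, hb⟩
  · exact Or.inl ⟨Fin.ext ha, Fin.ext hb⟩
  · exact Or.inr ⟨Fin.ext ha, Fin.ext hb⟩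

/-- list of codes of consecutive edges -/
def eList : List (Fin n) → List ℕ
  | [] => []
  | [_] => []
  | a :: b :: t => enc a b :: eList (b :: t)

@[simp] lemma eList_nil : eList ([] : List (Fin n)) = [] := rfl
@[simp] lemma eList_single (a : Fin n) : eList [a] = [] := rfl
@[simp] lemma eList_cons_cons (a b : Fin n) (t : List (Fin n)) :
    eList (a :: b :: t) = enc a b :: eList (b :: t) := rfl

lemma eList_mem {l : List (Fin n)} (hnd : l.Nodup) {c : ℕ} (hc : c ∈ eList l) :
    ∃ x y, x ∈ l ∧ y ∈ l ∧ x ≠ y ∧ c = enc x y := by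
  induction l with
  | nil => simp at hc
  | cons a t ih =>
    cases t with
    | nil => simp at hc
    | cons b t =>
      rw [eList_cons_cons, List.mem_cons] at hc
      rcases hc with rfl | hc
      · refine ⟨a, b, by simp, by simp, ?_, rfl⟩
        intro h; subst h; simp at hnd
      · obtain ⟨x, y, hx, hy, hxy, rfl⟩ := ih (List.nodup_cons.mp hnd).2 hc
        exact ⟨x, y, List.mem_cons_of_mem _ hx, List.mem_cons_of_mem _ hy, hxy, rfl⟩

lemma eList_notMem_of_notMem {l : List (Fin n)} (hnd : l.Nodup) {a : Fin n} {b : Fin n}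
    (ha : a ∉ l) : enc a b ∉ eList l := by
  intro hc
  obtain ⟨x, y, hx, hy, hxy, hcode⟩ := eList_mem hnd hc
  rcases enc_eq_iff hcode with ⟨rfl, rfl⟩ | ⟨rfl, rfl⟩
  · exact ha hx
  · exact ha hy

lemma eList_nodup {l : List (Fin n)} (hnd : l.Nodup) : (eList l).Nodup := by
  induction l with
  | nil => simp
  | cons a t ih =>
    cases t with
    | nil => simp
    | cons b t =>
      rw [eList_cons_cons, List.nodup_cons]
      have h1 := List.nodup_cons.mp hnd
      refine ⟨?_, ih h1.2⟩
      exact eList_notMem_of_notMem h1.2 h1.1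

/-- A nodup list is determined by its head and the finset of its consecutive-pair codes. -/
lemma nodup_eq_of_eList_toFinset {q₁ q₂ : List (Fin n)} (h1 : q₁.Nodup) (h2 : q₂.Nodup)
    (hh : q₁.head? = q₂.head?) (he : (eList q₁).toFinset = (eList q₂).toFinset) :
    q₁ = q₂ := by
  induction q₁ generalizing q₂ with
  | nil =>
    cases q₂ with
    | nil => rfl
    | cons a t => simp at hh
  | cons a t₁ ih =>
    cases q₂ with
    | nil => simp at hh
    | cons a' t₂ =>
      simp only [List.head?_cons, Option.some_inj] at hh
      subst hh
      cases t₁ with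
      | nil =>
        cases t₂ with
        | nil => rfl
        | cons b₂ t₂ =>
          exfalso
          have : enc a b₂ ∈ (eList ([a] : List (Fin n))).toFinset := by
            rw [he]; simp
          simp at this
      | cons b₁ t₁ =>
        cases t₂ with
        | nil =>
          exfalso
          have : enc a b₁ ∈ (eList ([a] : List (Fin n))).toFinset := by
            rw [← he]; simp
          simp at this
        | cons b₂ t₂ =>
          have hnd1 := List.nodup_cons.mp h1
          have hnd2 := List.nodup_cons.mp h2
          -- first codes agree
          have hmem : enc a b₁ ∈ (eList (a :: b₂ :: t₂)).toFinset := by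
            rw [← he]; simp
          rw [eList_cons_cons, List.toFinset_cons, Finset.mem_insert] at hmem
          have hb : b₁ = b₂ := by
            rcases hmem with hc | hc
            · rcases enc_eq_iff hc with ⟨-, h⟩ | ⟨h, h'⟩
              · exact h
              · exfalso
                apply (List.nodup_cons.mp h1).1
                rw [← h']; simp
            · exfalso
              rw [List.mem_toFinset] at hc
              exact eList_notMem_of_notMem hnd2.2 hnd2.1 hc
          subst hb
          -- cancel the first code from both finsets
          have htail : (eList (b₁ :: t₁)).toFinset = (eList (b₁ :: t₂)).toFinset := by
            ext c
            have hna1 : enc a b₁ ∉ (eList (b₁ :: t₁)).toFinset := by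
              rw [List.mem_toFinset]
              exact fun hc => eList_notMem_of_notMem hnd1.2 hnd1.1 hc
            have hna2 : enc a b₁ ∉ (eList (b₁ :: t₂)).toFinset := by
              rw [List.mem_toFinset]
              exact fun hc => eList_notMem_of_notMem hnd2.2 hnd2.1 hc
            constructor
            · intro hc
              have : c ∈ (eList (a :: b₁ :: t₂)).toFinset := by
                rw [← he]; simp only [eList_cons_cons, List.toFinset_cons,
                  Finset.mem_insert]
                exact Or.inr hc
              simp only [eList_cons_cons, List.toFinset_cons, Finset.mem_insert] at this
              rcases this with rfl | h
              · exact absurd hc hna1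
              · exact h
            · intro hc
              have : c ∈ (eList (a :: b₁ :: t₁)).toFinset := by
                rw [he]; simp only [eList_cons_cons, List.toFinset_cons,
                  Finset.mem_insert]
                exact Or.inr hc
              simp only [eList_cons_cons, List.toFinset_cons, Finset.mem_insert] at this
              rcases this with rfl | h
              · exact absurd hc hna2
              · exact h
          have := ih hnd1.2 hnd2.2 rfl htail
          rw [this]

end Enc
section Gweight
variable {n : ℕ}

/-- generic tie-breaking weight -/
noncomputable def gw : Fin n → Fin n → ℝ := fun i j => (2 : ℝ) ^ (enc i j)

lemma gw_pos (i j : Fin n) : 0 < gw i j := pow_pos (by norm_num) _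

lemma gw_symm (i j : Fin n) : gw i j = gw j i := by unfold gw; rw [enc_comm]

lemma pathWeight_gw_nonneg (l : List (Fin n)) : 0 ≤ pathWeight gw l := by
  induction l with
  | nil => simp
  | cons a t ih =>
    cases t with
    | nil => simp
    | cons b t =>
      have := gw_pos a b
      simp only [pathWeight_cons_cons] at *
      linarith

lemma pathWeight_gw_eq (l : List (Fin n)) :
    pathWeight gw l = (((eList l).map fun c => (2:ℕ) ^ c).sum : ℕ) := by
  induction l with
  | nil => simp
  | cons a t ih =>
    cases t with
    | nil => simp
    | cons b t =>
      simp only [pathWeight_cons_cons, eList_cons_cons, List.map_cons, List.sum_cons]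
      rw [ih]
      push_cast
      rfl

lemma pathWeight_gw_injective {q₁ q₂ : List (Fin n)} (h1 : q₁.Nodup) (h2 : q₂.Nodup)
    (hh : q₁.head? = q₂.head?) (hw : pathWeight gw q₁ = pathWeight gw q₂) :
    q₁ = q₂ := by
  rw [pathWeight_gw_eq, pathWeight_gw_eq] at hw
  have hnat : ((eList q₁).map fun c => (2:ℕ) ^ c).sum
      = ((eList q₂).map fun c => (2:ℕ) ^ c).sum := by exact_mod_cast hw
  have hs1 : (eList q₁).toFinset.sum (fun c => (2:ℕ) ^ c)
      = ((eList q₁).map fun c => (2:ℕ) ^ c).sum :=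
    List.sum_toFinset _ (eList_nodup h1)
  have hs2 : (eList q₂).toFinset.sum (fun c => (2:ℕ) ^ c)
      = ((eList q₂).map fun c => (2:ℕ) ^ c).sum :=
    List.sum_toFinset _ (eList_nodup h2)
  have hfin : (eList q₁).toFinset = (eList q₂).toFinset :=
    Finset.geomSum_injective (le_refl 2) (by simp only []; rw [hs1, hs2, hnat])
  exact nodup_eq_of_eList_toFinset h1 h2 hh hfin

end Gweight
section Pert
variable {n : ℕ}

/-- Perturbation of a symmetric positive weighting: shortest-paths–preserving,
symmetric, positive, and with unique nodup shortest paths. -/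
lemma exists_pert (E : Fin n → Fin n → Prop) (w : Fin n → Fin n → ℝ)
    (hwsymm : ∀ i j, w i j = w j i) (hwpos : ∀ i j, E i j → 0 < w i j) :
    ∃ w' : Fin n → Fin n → ℝ,
      (∀ i j, w' i j = w' j i) ∧
      (∀ i j, E i j → 0 < w' i j) ∧
      (∀ p, IsShortestPath E w' p → IsShortestPath E w p) ∧
      (∀ q₁ q₂ : List (Fin n), q₁.Nodup → q₂.Nodup → q₁.head? = q₂.head? →
        pathWeight w' q₁ = pathWeight w' q₂ → q₁ = q₂) := by
  classical
  set S : Set (List (Fin n)) := {l | l.Nodup} with hS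
  have hfinS : S.Finite := by
    apply (List.finite_length_le (Fin n) n).subset
    intro l hl
    simpa using List.Nodup.length_le_card hl
  -- Γ : upper bound for pathWeight gw on nodup lists
  obtain ⟨m, hmS, hmax⟩ := Set.exists_max_image S (pathWeight gw) hfinS ⟨[], by simp [hS]⟩
  set Γ : ℝ := pathWeight gw m with hΓdef
  have hΓ0 : 0 ≤ Γ := pathWeight_gw_nonneg m
  have hΓ : ∀ q : List (Fin n), q.Nodup → pathWeight gw q ≤ Γ := fun q hq => hmax q hq
  -- Δ : minimal positive gap between weights of nodup lists
  have hgap : ∃ Δ : ℝ, 0 < Δ ∧ ∀ q₁ q₂ : List (Fin n), q₁.Nodup → q₂.Nodup →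
      pathWeight w q₁ < pathWeight w q₂ → pathWeight w q₁ + Δ ≤ pathWeight w q₂ := by
    set D : Set ℝ := {d | 0 < d ∧ ∃ q₁ ∈ S, ∃ q₂ ∈ S,
      d = pathWeight w q₂ - pathWeight w q₁} with hD
    have hfinD : D.Finite := by
      apply ((hfinS.prod hfinS).image
        (fun p : List (Fin n) × List (Fin n) => pathWeight w p.2 - pathWeight w p.1)).subset
      rintro d ⟨-, q₁, h₁, q₂, h₂, rfl⟩
      exact ⟨(q₁, q₂), ⟨h₁, h₂⟩, rfl⟩
    by_cases hne : D.Nonempty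
    · obtain ⟨Δ, hΔD, hmin⟩ := Set.exists_min_image D id hfinD hne
      refine ⟨Δ, hΔD.1, fun q₁ q₂ h₁ h₂ hlt => ?_⟩
      have : (pathWeight w q₂ - pathWeight w q₁) ∈ D :=
        ⟨by linarith, q₁, h₁, q₂, h₂, rfl⟩
      have := hmin _ this
      simp only [id] at this
      linarith
    · refine ⟨1, one_pos, fun q₁ q₂ h₁ h₂ hlt => ?_⟩
      exfalso
      exact hne ⟨pathWeight w q₂ - pathWeight w q₁, by linarith, q₁, h₁, q₂, h₂, rfl⟩
  obtain ⟨Δ, hΔpos, hΔ⟩ := hgap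
  set ε : ℝ := Δ / (Γ + 1) with hεdef
  have hεpos : 0 < ε := div_pos hΔpos (by linarith)
  have hεmul : ε * (Γ + 1) = Δ := div_mul_cancel₀ Δ (by linarith)
  have hεΓ : ∀ q : List (Fin n), q.Nodup → ε * pathWeight gw q < Δ := by
    intro q hq
    have h1 : ε * pathWeight gw q ≤ ε * Γ :=
      mul_le_mul_of_nonneg_left (hΓ q hq) hεpos.le
    nlinarith
  refine ⟨fun i j => w i j + ε * gw i j, ?_, ?_, ?_, ?_⟩
  · intro i j; simp only []; rw [hwsymm i j, gw_symm i j]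
  · intro i j hij
    have h1 := gw_pos i j
    have h2 := hwpos i j hij
    simp only []
    nlinarith
  · -- preservation
    intro p hp
    have hdecomp : ∀ l : List (Fin n),
        pathWeight (fun i j => w i j + ε * gw i j) l
          = pathWeight w l + ε * pathWeight gw l := by
      intro l
      rw [pathWeight_add w (fun i j => ε * gw i j) l, pathWeight_smul]
    have hwnn : ∀ i j, E i j → (0:ℝ) ≤ w i j := fun i j h => (hwpos i j h).le
    have hgnn : ∀ i j, E i j → (0:ℝ) ≤ gw i j := fun i j _ => (gw_pos i j).le
    obtain ⟨p₀, hp₀path, hp₀nd, hp₀h, hp₀l, hp₀le⟩ := exists_nodup_path hp.1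
    have hkey : pathWeight w p = pathWeight w p₀ := by
      have h1 := hp.2 p₀ hp₀path hp₀h hp₀l
      rw [hdecomp, hdecomp] at h1
      have haw := hp₀le w hwnn
      have hag := hp₀le gw hgnn
      nlinarith
    refine ⟨hp.1, fun q hq hh hl => ?_⟩
    obtain ⟨q₀, hq₀path, hq₀nd, hq₀h, hq₀l, hq₀le⟩ := exists_nodup_path hq
    have h2 := hp.2 q₀ hq₀path (hq₀h.trans hh) (hq₀l.trans hl)
    rw [hdecomp, hdecomp] at h2
    have hb1 := hεΓ q₀ hq₀nd
    have hg0 : 0 ≤ ε * pathWeight gw p :=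
      mul_nonneg hεpos.le (pathWeight_gw_nonneg p)
    have hlt : pathWeight w p₀ < pathWeight w q₀ + Δ := by linarith [hkey]
    have : pathWeight w p₀ ≤ pathWeight w q₀ := by
      by_contra hco
      push_neg at hco
      have := hΔ q₀ p₀ hq₀nd hp₀nd hco
      linarith
    have := hq₀le w hwnn
    linarith [hkey]
  · -- uniqueness on nodup lists
    intro q₁ q₂ h₁ h₂ hh hw
    have hdecomp : ∀ l : List (Fin n),
        pathWeight (fun i j => w i j + ε * gw i j) l
          = pathWeight w l + ε * pathWeight gw l := by
      intro l
      rw [pathWeight_add w (fun i j => ε * gw i j) l, pathWeight_smul]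
    rw [hdecomp, hdecomp] at hw
    rcases lt_trichotomy (pathWeight w q₁) (pathWeight w q₂) with hlt | heq | hlt
    · exfalso
      have := hΔ q₁ q₂ h₁ h₂ hlt
      have hb := hεΓ q₁ h₁
      have : 0 ≤ ε * pathWeight gw q₂ := mul_nonneg hεpos.le (pathWeight_gw_nonneg q₂)
      linarith
    · have : ε * pathWeight gw q₁ = ε * pathWeight gw q₂ := by linarith
      have hg : pathWeight gw q₁ = pathWeight gw q₂ :=
        mul_left_cancel₀ (ne_of_gt hεpos) this
      exact pathWeight_gw_injective h₁ h₂ hh hg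
    · exfalso
      have := hΔ q₂ q₁ h₂ h₁ hlt
      have hb := hεΓ q₂ h₂
      have : 0 ≤ ε * pathWeight gw q₁ := mul_nonneg hεpos.le (pathWeight_gw_nonneg q₁)
      linarith

end Pert

/-- if every positively weighted directed graph on n nodes has a
shortest-paths preserving reweighting with aspect ratio at most α(n), then the
same holds for every positively weighted undirected (symmetric) graph on n
nodes, with the reweighting also symmetric. -/
theorem stmt12 (n : ℕ) (α : ℕ → ℝ)
    (hdir : ∀ (E : Fin n → Fin n → Prop) (w : Fin n → Fin n → ℝ),
      (∀ i j, E i j → 0 < w i j) →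
      ∃ wH : Fin n → Fin n → ℝ,
        (∀ i j, E i j → 0 < wH i j) ∧
        (∀ p, IsShortestPath E wH p → IsShortestPath E w p) ∧
        (∀ i j k l, E i j → E k l → wH i j ≤ α n * wH k l)) :
    ∀ (E : Fin n → Fin n → Prop) (w : Fin n → Fin n → ℝ),
      (∀ i j, E i j → E j i) → (∀ i j, w i j = w j i) →
      (∀ i j, E i j → 0 < w i j) →
      ∃ wH : Fin n → Fin n → ℝ,
        (∀ i j, wH i j = wH j i) ∧
        (∀ i j, E i j → 0 < wH i j) ∧
        (∀ p, IsShortestPath E wH p → IsShortestPath E w p) ∧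
        (∀ i j k l, E i j → E k l → wH i j ≤ α n * wH k l) := by
  intro E w hEsymm hwsymm hwpos
  -- perturb w to make nodup shortest paths unique
  obtain ⟨w', hw'symm, hw'pos, hw'pres, hw'uni⟩ := exists_pert E w hwsymm hwpos
  -- apply the directed hypothesis to the perturbed weights
  obtain ⟨wH, hHpos, hHpres, hHratio⟩ := hdir E w' hw'pos
  -- recombine
  refine ⟨fun i j => wH i j + wH j i, fun i j => add_comm _ _, ?_, ?_, ?_⟩
  · intro i j hij
    have h1 := hHpos i j hij
    have h2 := hHpos j i (hEsymm i j hij)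
    simp only []
    linarith
  · -- preservation
    intro p hp
    have hp1 : IsPath E p := hp.1
    -- decomposition of the symmetrized weight
    have hdecomp : ∀ l : List (Fin n),
        pathWeight (fun i j => wH i j + wH j i) l
          = pathWeight wH l + pathWeight wH l.reverse := by
      intro l
      rw [pathWeight_add wH (fun i j => wH j i) l, pathWeight_reverse]
    -- shortest wH-paths in both directions
    obtain ⟨q₀, hq₀s, hq₀h, hq₀l⟩ := exists_shortest hHpos hp1
    obtain ⟨t₀, ht₀s, ht₀h, ht₀l⟩ := exists_shortest hHpos (isPath_reverse hEsymm hp1)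
    rw [List.head?_reverse] at ht₀h
    rw [List.getLast?_reverse] at ht₀l
    -- both are w'-shortest
    have hq₀' := hHpres q₀ hq₀s
    have ht₀' := hHpres t₀ ht₀s
    have htrev' : IsShortestPath E w' t₀.reverse := ht₀'.reverse hEsymm hw'symm
    -- q₀ and t₀.reverse have equal endpoints and equal w'-weights, so are equal
    have hth : t₀.reverse.head? = q₀.head? := by
      rw [List.head?_reverse, ht₀l, hq₀h]
    have htl : t₀.reverse.getLast? = q₀.getLast? := by
      rw [List.getLast?_reverse, ht₀h, hq₀l]
    have hweq : pathWeight w' q₀ = pathWeight w' t₀.reverse := by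
      have h1 := hq₀'.2 t₀.reverse htrev'.1 hth htl
      have h2 := htrev'.2 q₀ hq₀'.1 hth.symm htl.symm
      linarith
    have hq₀nd : q₀.Nodup := hq₀s.nodup hHpos
    have ht₀nd : t₀.reverse.Nodup := List.nodup_reverse.mpr (ht₀s.nodup hHpos)
    have hqt : q₀ = t₀.reverse := hw'uni q₀ t₀.reverse hq₀nd ht₀nd hth.symm hweq
    have hqt' : q₀.reverse = t₀ := by rw [hqt, List.reverse_reverse]
    -- squeeze
    have hA : pathWeight (fun i j => wH i j + wH j i) p
        ≤ pathWeight (fun i j => wH i j + wH j i) q₀ :=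
      hp.2 q₀ hq₀s.1 hq₀h hq₀l
    have hB : pathWeight wH q₀ ≤ pathWeight wH p :=
      hq₀s.2 p hp1 hq₀h.symm hq₀l.symm
    have hC : pathWeight wH t₀ ≤ pathWeight wH p.reverse :=
      ht₀s.2 p.reverse (isPath_reverse hEsymm hp1)
        (by rw [List.head?_reverse, ht₀h]) (by rw [List.getLast?_reverse, ht₀l])
    rw [hdecomp, hdecomp, hqt'] at hA
    -- p is wH-shortest
    have hpwH : IsShortestPath E wH p := by
      refine ⟨hp1, fun q hq hh hl => ?_⟩
      have h1 := hq₀s.2 q hq (by rw [hh, hq₀h]) (by rw [hl, hq₀l])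
      linarith
    exact hw'pres p (hHpres p hpwH)
  · -- aspect ratio
    intro i j k l hij hkl
    have h1 := hHratio i j k l hij hkl
    have h2 := hHratio j i l k (hEsymm i j hij) (hEsymm k l hkl)
    simp only []
    linarith [mul_add (α n) (wH k l) (wH l k)]
end

section
/- In the directed grid graph on vertices (i,j), 0 ≤ i,j ≤ L, with horizontal edges (i,j)→(i,j+1) of weight 1 and vertical edges (i,j)→(i-1,j) of weight (α√n)^{2j} (all vertical edges in column j have this weight, α ≥ 1, n sufficiently large, L ≤ √n): for a source s=(i,j) and target t=(i-1,k) with k > j, the unique shortest s–t path takes the vertical edge in column j followed by k-j horizontal edges, and every other s–t path P' satisfies w(P') > α · dist(s,t). Here dist(s,t) = (α√n)^{2j} + (k-j). -/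
/-- Directed grid on vertices (row, column) with 0 ≤ row, col ≤ L; horizontal
edges (i,j)→(i,j+1) and vertical edges (i,j)→(i-1,j) (rows decrease upward). -/
def gridE (L : ℕ) (u v : ℕ × ℕ) : Prop :=
  (v.1 = u.1 ∧ v.2 = u.2 + 1 ∧ u.1 ≤ L ∧ u.2 + 1 ≤ L) ∨
  (v.1 + 1 = u.1 ∧ v.2 = u.2 ∧ u.1 ≤ L ∧ u.2 ≤ L)

/-- Canonical "one row up" path: from (i,j), one vertical edge to (i-1,j),
then horizontal edges to (i-1,k). -/
def horPath (i j k : ℕ) : List (ℕ × ℕ) :=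
  (i, j) :: (List.range (k - j + 1)).map (fun t => (i - 1, j + t))

/-- Canonical "one column right" path: from (i,j), all vertical edges in
column j up to (k,j), then one horizontal edge to (k,j+1). -/
def vertPath (i j k : ℕ) : List (ℕ × ℕ) :=
  ((List.range (i - k + 1)).map (fun t => (i - t, j))) ++ [(k, j + 1)]


/-- Grid weights: horizontal edges weigh 1, vertical edges in column j weigh
(α√n)^(2j). -/
noncomputable def gridW (α : ℝ) (n : ℕ) (u v : ℕ × ℕ) : ℝ :=
  if u.1 = v.1 then 1 else (α * Real.sqrt n) ^ (2 * u.2)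

/-- Horizontal segment of length m starting at (r,c). -/
def horSeg (r c m : ℕ) : List (ℕ × ℕ) :=
  (List.range (m+1)).map (fun t => (r, c+t))

lemma horSeg_zero (r c : ℕ) : horSeg r c 0 = [(r, c)] := by
  simp [horSeg, List.range_succ]

lemma horSeg_succ (r c m : ℕ) :
    horSeg r c (m+1) = (r, c) :: horSeg r (c+1) m := by
  unfold horSeg
  rw [List.range_succ_eq_map, List.map_cons, List.map_map]
  simp only [Nat.add_zero]
  congr 1
  apply List.map_congr_left
  intro t _
  simp [Function.comp]
  omega

lemma horPath_eq (i j k : ℕ) : horPath i j k = (i, j) :: horSeg (i-1) j (k-j) := rfl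

lemma horSeg_head (r c m : ℕ) : (horSeg r c m).head? = some (r, c) := by
  cases m <;> simp [horSeg_zero, horSeg_succ]

lemma horSeg_last (r c m : ℕ) : (horSeg r c m).getLast? = some (r, c+m) := by
  induction m generalizing c with
  | zero => simp [horSeg_zero]
  | succ m ih =>
    rw [horSeg_succ]
    rcases hm : horSeg r (c+1) m with _ | ⟨x, xs⟩
    · exact absurd (ih (c+1)) (by simp [hm])
    · rw [List.getLast?_cons_cons, ← hm, ih]
      congr 2
      omega

lemma pathWeight_cons {V : Type} (w : V → V → ℝ) (a b : V) (l : List V)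
    (hb : l.head? = some b) :
    pathWeight w (a :: l) = w a b + pathWeight w l := by
  cases l with
  | nil => simp at hb
  | cons x xs =>
    simp at hb
    subst hb
    rfl

lemma isPath_cons {V : Type} (E : V → V → Prop) (a b : V) (l : List V)
    (hb : l.head? = some b) :
    IsPath E (a :: l) ↔ (E a b ∧ IsPath E l) := by
  cases l with
  | nil => simp at hb
  | cons x xs =>
    simp at hb
    subst hb
    exact Iff.rfl

lemma horSeg_weight (α : ℝ) (n : ℕ) (r c m : ℕ) :
    pathWeight (gridW α n) (horSeg r c m) = (m : ℝ) := by
  induction m generalizing c with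
  | zero => simp [horSeg_zero, pathWeight]
  | succ m ih =>
    rw [horSeg_succ, pathWeight_cons (gridW α n) _ (r, c+1) _ (horSeg_head r (c+1) m),
      ih (c+1)]
    simp [gridW]
    ring

lemma horSeg_isPath (L r c m : ℕ) (hr : r ≤ L) (hc : c + m ≤ L) :
    IsPath (gridE L) (horSeg r c m) := by
  induction m generalizing c with
  | zero => rw [horSeg_zero]; trivial
  | succ m ih =>
    rw [horSeg_succ, isPath_cons (gridE L) _ (r, c+1) _ (horSeg_head r (c+1) m)]
    exact ⟨Or.inl ⟨rfl, rfl, hr, by omega⟩, ih (c+1) (by omega)⟩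

lemma path_mono (L : ℕ) : ∀ q : List (ℕ × ℕ), IsPath (gridE L) q →
    ∀ u z : ℕ × ℕ, q.head? = some u → q.getLast? = some z →
    z.1 ≤ u.1 ∧ u.2 ≤ z.2 := by
  intro q
  induction q with
  | nil => intro h; exact h.elim
  | cons a l ih =>
    cases l with
    | nil =>
      intro _ u z hu hz
      simp at hu hz
      subst hu; subst hz
      exact ⟨le_refl _, le_refl _⟩
    | cons b m =>
      intro h u z hu hz
      obtain ⟨hab, hrest⟩ := h
      have h2 := ih hrest b z rfl (by rw [← List.getLast?_cons_cons (l := m) (a := a)]; exact hz)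
      simp at hu
      subst hu
      rcases hab with ⟨h1, h2', _⟩ | ⟨h1, h2', _⟩ <;> omega

lemma path_flat (L : ℕ) : ∀ q : List (ℕ × ℕ), IsPath (gridE L) q →
    ∀ r b d : ℕ, q.head? = some (r, b) → q.getLast? = some (r, d) →
    q = horSeg r b (d - b) := by
  intro q
  induction q with
  | nil => intro h; exact h.elim
  | cons a l ih =>
    cases l with
    | nil =>
      intro _ r b d hu hz
      simp at hu hz
      have : d = b := by rw [hu, Prod.ext_iff] at hz; omega
      rw [this, Nat.sub_self, horSeg_zero, hu]
    | cons v m =>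
      intro h r b d hu hz
      obtain ⟨hav, hrest⟩ := h
      simp at hu
      subst hu
      rw [List.getLast?_cons_cons] at hz
      have hmono := path_mono L (v :: m) hrest v (r, d) rfl hz
      rcases hav with ⟨h1, h2, _⟩ | ⟨h1, h2, _⟩
      · -- horizontal
        have hv : v = (r, b + 1) := by
          obtain ⟨v1, v2⟩ := v; simp at h1 h2 ⊢; omega
        subst hv
        have hbd : b + 1 ≤ d := hmono.2
        have := ih hrest r (b+1) d rfl hz
        rw [this]
        have hd : d - b = (d - (b+1)) + 1 := by omega
        rw [hd, horSeg_succ]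
      · -- vertical: impossible
        exfalso
        have : v.1 + 1 = r := h1
        have := hmono.1
        omega

lemma path_drop (L : ℕ) (α : ℝ) (n : ℕ) : ∀ q : List (ℕ × ℕ), IsPath (gridE L) q →
    ∀ c b d : ℕ, q.head? = some (c+1, b) → q.getLast? = some (c, d) →
    ∃ ℓ : ℕ, b ≤ ℓ ∧ ℓ ≤ d ∧
      pathWeight (gridW α n) q = (α * Real.sqrt n) ^ (2*ℓ) + ((d - b : ℕ) : ℝ) ∧
      (ℓ = b → q = horPath (c+1) b d) := by
  intro q
  induction q with
  | nil => intro h; exact h.elim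
  | cons a l ih =>
    cases l with
    | nil =>
      intro _ c b d hu hz
      simp at hu hz
      exfalso
      rw [hu, Prod.ext_iff] at hz
      omega
    | cons v m =>
      intro h c b d hu hz
      obtain ⟨hav, hrest⟩ := h
      simp at hu
      subst hu
      rw [List.getLast?_cons_cons] at hz
      rcases hav with ⟨h1, h2, _⟩ | ⟨h1, h2, _⟩
      · -- horizontal first
        have hv : v = (c+1, b+1) := by
          obtain ⟨v1, v2⟩ := v; simp at h1 h2 ⊢; omega
        subst hv
        obtain ⟨ℓ, hbℓ, hℓd, hw, _⟩ := ih hrest c (b+1) d rfl hz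
        refine ⟨ℓ, by omega, hℓd, ?_, fun hh => absurd hh (by omega)⟩
        rw [pathWeight_cons (gridW α n) _ (c+1, b+1) _ (List.head?_cons), hw]
        have : gridW α n (c+1, b) (c+1, b+1) = 1 := by simp [gridW]
        rw [this]
        have hc : (d - b : ℕ) = (d - (b+1) : ℕ) + 1 := by omega
        rw [hc]
        push_cast
        ring
      · -- vertical first
        have hv : v = (c, b) := by
          obtain ⟨v1, v2⟩ := v; simp at h1 h2 ⊢; omega
        subst hv
        have hmono := path_mono L ((c, b) :: m) hrest (c, b) (c, d) rfl hz
        have hbd : b ≤ d := hmono.2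
        have hflat := path_flat L ((c, b) :: m) hrest c b d rfl hz
        refine ⟨b, le_refl _, hbd, ?_, ?_⟩
        · rw [pathWeight_cons (gridW α n) _ (c, b) _ (List.head?_cons), hflat, horSeg_weight]
          have : gridW α n (c+1, b) (c, b) = (α * Real.sqrt n) ^ (2*b) := by
            simp [gridW]
          rw [this]
        · intro _
          rw [horPath_eq]
          simp only [Nat.add_sub_cancel]
          rw [hflat]

lemma key_ineq (α : ℝ) (hα : 1 ≤ α) (n : ℕ) (hn : 4 ≤ n) (j ℓ : ℕ) (hjℓ : j < ℓ)
    (c : ℝ) (hc0 : 0 ≤ c) (hc : c ≤ Real.sqrt n) :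
    (α * Real.sqrt n) ^ (2*ℓ) + c > α * ((α * Real.sqrt n) ^ (2*j) + c) := by
  set x := α * Real.sqrt n with hxdef
  have hs : (2:ℝ) ≤ Real.sqrt n := by
    rw [show (2:ℝ) = Real.sqrt 4 by
      rw [show (4:ℝ) = 2^2 by norm_num, Real.sqrt_sq (by norm_num)]]
    exact Real.sqrt_le_sqrt (by exact_mod_cast hn)
  have hx2 : 2 ≤ x := by nlinarith
  have hx1 : (1:ℝ) ≤ x := by linarith
  have h2α : 2 * α ≤ x := by nlinarith
  have hαc : α * c ≤ x := by
    calc α * c ≤ α * Real.sqrt n := by nlinarith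
    _ = x := rfl
  have hy : (1:ℝ) ≤ x ^ (2*j) := one_le_pow₀ hx1
  have h1 : x ^ (2*j+2) ≤ x ^ (2*ℓ) := pow_le_pow_right₀ hx1 (by omega)
  have h2 : x ^ (2*j+2) = x^2 * x^(2*j) := by ring
  set y := x ^ (2*j) with hydef
  have hxpos : (0:ℝ) < x := by linarith
  have hypos : (0:ℝ) < y := by linarith
  nlinarith [mul_nonneg (mul_nonneg (by linarith : (0:ℝ) ≤ x - 2) hxpos.le) hypos.le,
    mul_nonneg (by linarith : (0:ℝ) ≤ x - 2*α) hypos.le,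
    mul_nonneg (by linarith : (0:ℝ) ≤ y - 1) hxpos.le]


/-- for s = (i,j) and t = (i-1,k) with k > j, the canonical path
(vertical edge in column j, then horizontal edges) is the unique shortest s–t
path, it has weight (α√n)^{2j} + (k-j), and every other s–t path is more than
α times longer. -/
theorem stmt13 (α : ℝ) (hα : 1 ≤ α) (n L : ℕ) (hn : 4 ≤ n)
    (hL : (L : ℝ) ≤ Real.sqrt n)
    (i j k : ℕ) (hi1 : 1 ≤ i) (hiL : i ≤ L) (hjk : j < k) (hkL : k ≤ L) :
    IsPath (gridE L) (horPath i j k) ∧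
    (horPath i j k).head? = some ((i, j) : ℕ × ℕ) ∧
    (horPath i j k).getLast? = some ((i - 1, k) : ℕ × ℕ) ∧
    pathWeight (gridW α n) (horPath i j k)
      = (α * Real.sqrt n) ^ (2 * j) + ((k - j : ℕ) : ℝ) ∧
    ∀ q : List (ℕ × ℕ), IsPath (gridE L) q →
      q.head? = some ((i, j) : ℕ × ℕ) → q.getLast? = some ((i - 1, k) : ℕ × ℕ) →
      q ≠ horPath i j k →
      pathWeight (gridW α n) q
        > α * ((α * Real.sqrt n) ^ (2 * j) + ((k - j : ℕ) : ℝ)) := by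
  have hine : i ≠ i - 1 := by omega
  have hgw : gridW α n (i, j) (i-1, j) = (α * Real.sqrt n) ^ (2*j) := by
    simp [gridW, hine]
  refine ⟨?_, ?_, ?_, ?_, ?_⟩
  · rw [horPath_eq, isPath_cons (gridE L) _ (i-1, j) _ (horSeg_head _ _ _)]
    refine ⟨Or.inr ⟨by omega, rfl, hiL, by omega⟩, horSeg_isPath L _ _ _ (by omega) (by omega)⟩
  · rfl
  · rw [horPath_eq]
    rcases hm : horSeg (i-1) j (k-j) with _ | ⟨x, xs⟩
    · exact absurd (horSeg_head (i-1) j (k-j)) (by simp [hm])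
    · rw [List.getLast?_cons_cons, ← hm, horSeg_last]
      congr 2
      omega
  · rw [horPath_eq, pathWeight_cons (gridW α n) _ (i-1, j) _ (horSeg_head _ _ _),
      horSeg_weight, hgw]
  · intro q hq hh hl hne
    have hh' : q.head? = some ((i-1)+1, j) := by
      rw [hh]; congr 2; omega
    obtain ⟨ℓ, hbℓ, hℓd, hw, huniq⟩ := path_drop L α n q hq (i-1) j k hh' hl
    have hℓj : j < ℓ := by
      rcases Nat.lt_or_ge j ℓ with h | h
      · exact h
      · exfalso
        have : ℓ = j := by omega
        have := huniq this
        rw [this] at hne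
        apply hne
        congr 1
        omega
    rw [hw]
    apply key_ineq α hα n hn j ℓ hℓj
    · positivity
    · calc ((k - j : ℕ) : ℝ) ≤ (L : ℝ) := by exact_mod_cast (by omega : k - j ≤ L)
      _ ≤ Real.sqrt n := hL
end

section
/- Let α_H > 1 and let (H_L) denote a sequence of positive edge-weighted (L+1)×(L+1) directed grid graphs (edges rightward and upward) in which the minimum edge weight is at least 1, and suppose for every 'one-row-up' and 'one-column-right' vertex pair the designated canonical path (as in the grid construction) is the unique α_H-approximate shortest path under the weighting. Then the total weight in H of the last row plus last column of the L×L-size grid is at least (α_H)^{L-1}. Formally: prove by induction that if for every relevant pair the 'good' path is strictly more than α_H times shorter than the competing 'bad' path, then the sum of weights of the edges on the bottom row and rightmost column is at least (α_H)^{L-1}. -/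
lemma range_succ_map {V : Type} (f : ℕ → V) (n : ℕ) :
    (List.range (n+1)).map f = f 0 :: (List.range n).map (fun t => f (t+1)) := by
  rw [List.range_succ_eq_map, List.map_cons, List.map_map]; rfl

lemma pathWeight_range {V : Type} (w : V → V → ℝ) (n : ℕ) (f : ℕ → V) :
    pathWeight w ((List.range (n+1)).map f) = ∑ t ∈ Finset.range n, w (f t) (f (t+1)) := by
  induction n generalizing f with
  | zero => simp [range_succ_map, pathWeight]
  | succ m ih =>
    rw [range_succ_map f (m+1), range_succ_map (fun t => f (t+1)) m]
    show w (f 0) (f 1) + pathWeight w _ = _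
    rw [← range_succ_map (fun t => f (t+1)) m, ih]
    rw [Finset.sum_range_succ']; ring

lemma isPath_range {V : Type} (E : V → V → Prop) (n : ℕ) (f : ℕ → V)
    (h : ∀ t, t < n → E (f t) (f (t+1))) : IsPath E ((List.range (n+1)).map f) := by
  induction n generalizing f with
  | zero => rw [range_succ_map]; exact trivial
  | succ m ih =>
    rw [range_succ_map f (m+1), range_succ_map (fun t => f (t+1)) m]
    refine ⟨h 0 (Nat.succ_pos m), ?_⟩
    rw [← range_succ_map (fun t => f (t+1)) m]
    exact ih (fun t => f (t+1)) (fun t ht => h (t+1) (by omega))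

lemma head?_range_map {V : Type} (n : ℕ) (f : ℕ → V) :
    ((List.range (n+1)).map f).head? = some (f 0) := by
  rw [range_succ_map]; rfl

lemma getLast?_range_map {V : Type} (n : ℕ) (f : ℕ → V) :
    ((List.range (n+1)).map f).getLast? = some (f n) := by
  rw [List.range_succ, List.map_append]
  simp

lemma getElem1_range_map {V : Type} (n : ℕ) (f : ℕ → V) :
    ((List.range (n+2)).map f)[1]? = some (f 1) := by
  simp

def fA (m : ℕ) : ℕ → ℕ × ℕ
  | 0 => (m+1, 0)
  | (t+1) => (m, t)

def gA (m : ℕ) : ℕ → ℕ × ℕ := fun t => if t ≤ m+1 then (m+1, t) else (m, m+1)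

def fB (m : ℕ) : ℕ → ℕ × ℕ := fun t => if t ≤ m then (m - t, m) else (0, m+1)

def gB (m : ℕ) : ℕ → ℕ × ℕ
  | 0 => (m, m)
  | (t+1) => (m - t, m+1)

lemma horPath_eq_s15 (m : ℕ) : horPath (m+1) 0 (m+1) = (List.range (m+3)).map (fA m) := by
  rw [show m+3 = (m+2)+1 from rfl, range_succ_map]
  simp [horPath, fA]

lemma vertPath_eq (m : ℕ) : vertPath m m 0 = (List.range (m+2)).map (fB m) := by
  rw [show m+2 = (m+1)+1 from rfl, List.range_succ, List.map_append]
  unfold vertPath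
  congr 1
  · simp only [Nat.sub_zero]
    refine List.map_congr_left (fun t ht => ?_)
    rw [List.mem_range] at ht
    simp only [fB, if_pos (by omega : t ≤ m)]
  · simp [fB]

/-- induction lemma for the two-sided stretch DAG lower bound.
If in a positive weighting w_H of the (L+1)×(L+1) grid (minimum edge weight ≥ 1)
every canonical one-row-up and one-column-right path is the unique
α_H-approximate shortest path between its endpoints (i.e. every competing path
is more than α_H times longer in H), then the total w_H-weight of the last row
plus last column is at least α_H^L.  (This is the inductive claim
"an M×M grid forces total weight ≥ α_H^{M-1}" with M = L+1.) -/
theorem stmt15 (αH : ℝ) (hαH : 1 < αH) (L : ℕ) (hL : 1 ≤ L)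
    (wH : ℕ × ℕ → ℕ × ℕ → ℝ)
    (hmin : ∀ u v, gridE L u v → 1 ≤ wH u v)
    (hHor : ∀ i j k : ℕ, 1 ≤ i → i ≤ L → j < k → k ≤ L →
      ∀ q : List (ℕ × ℕ), IsPath (gridE L) q →
        q.head? = some ((i, j) : ℕ × ℕ) → q.getLast? = some ((i - 1, k) : ℕ × ℕ) →
        q ≠ horPath i j k →
        pathWeight wH q > αH * pathWeight wH (horPath i j k))
    (hVert : ∀ i j k : ℕ, k < i → i ≤ L → j + 1 ≤ L →
      ∀ q : List (ℕ × ℕ), IsPath (gridE L) q →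
        q.head? = some ((i, j) : ℕ × ℕ) → q.getLast? = some ((k, j + 1) : ℕ × ℕ) →
        q ≠ vertPath i j k →
        pathWeight wH q > αH * pathWeight wH (vertPath i j k)) :
    (∑ j ∈ Finset.range L, wH (L, j) (L, j + 1))
      + (∑ i ∈ Finset.range L, wH (i + 1, L) (i, L)) ≥ αH ^ L := by
  have hα0 : (0:ℝ) < αH := by linarith
  suffices key : ∀ m, 1 ≤ m → m ≤ L →
      αH ^ m ≤ (∑ j ∈ Finset.range m, wH (m, j) (m, j + 1))
        + (∑ i ∈ Finset.range m, wH (i + 1, m) (i, m)) by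
    exact key L hL le_rfl
  intro m
  induction m with
  | zero => intro h; omega
  | succ m ih =>
    intro _ hmL
    rcases Nat.eq_zero_or_pos m with rfl | hm
    · -- base case: m = 0, grid cell (1,0)-(1,1)-(0,1)
      simp only [Finset.sum_range_one, pow_one, Nat.zero_add]
      have hq : IsPath (gridE L) [(1,0),(1,1),(0,1)] :=
        ⟨Or.inl ⟨rfl, rfl, hL, hL⟩, Or.inr ⟨rfl, rfl, hL, hL⟩, trivial⟩
      have hv : vertPath 1 0 0 = [(1,0),(0,0),(0,1)] := by
        simp [vertPath, List.range_succ]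
      have hne : ([(1,0),(1,1),(0,1)] : List (ℕ×ℕ)) ≠ vertPath 1 0 0 := by
        rw [hv]; simp
      have hkey := hVert 1 0 0 (by omega) hL (by omega) [(1,0),(1,1),(0,1)] hq rfl rfl hne
      rw [hv] at hkey
      have e1 : (1:ℝ) ≤ wH (1,0) (0,0) := hmin _ _ (Or.inr ⟨rfl, rfl, hL, by omega⟩)
      have e2 : (1:ℝ) ≤ wH (0,0) (0,1) := hmin _ _ (Or.inl ⟨rfl, rfl, by omega, hL⟩)
      simp only [pathWeight] at hkey
      nlinarith [hkey, e1, e2, hα0, hαH]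
    · -- inductive step, 1 ≤ m, m + 1 ≤ L
      have IH := ih hm (by omega)
      -- inequality (A): row m+1 then up, vs horPath (m+1) 0 (m+1)
      have ispathA : IsPath (gridE L) ((List.range (m+3)).map (gA m)) := by
        rw [show m+3 = (m+2)+1 from rfl]
        apply isPath_range
        intro t ht
        by_cases h : t ≤ m
        · rw [show gA m t = (m+1, t) from if_pos (by omega),
              show gA m (t+1) = (m+1, t+1) from if_pos (by omega)]
          exact Or.inl ⟨rfl, rfl, hmL, by omega⟩
        · have ht' : t = m+1 := by omega
          subst ht'
          rw [show gA m (m+1) = (m+1, m+1) from if_pos (by omega),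
              show gA m (m+2) = (m, m+1) from if_neg (by omega)]
          exact Or.inr ⟨rfl, rfl, hmL, hmL⟩
      have headA : ((List.range (m+3)).map (gA m)).head? = some ((m+1, 0) : ℕ × ℕ) := by
        rw [show m+3 = (m+2)+1 from rfl, head?_range_map]; rfl
      have lastA : ((List.range (m+3)).map (gA m)).getLast? = some ((m+1-1, m+1) : ℕ × ℕ) := by
        rw [show m+3 = (m+2)+1 from rfl, getLast?_range_map,
            show gA m (m+2) = (m, m+1) from if_neg (by omega)]
        rfl
      have neA : (List.range (m+3)).map (gA m) ≠ horPath (m+1) 0 (m+1) := by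
        rw [horPath_eq_s15]
        intro h
        have h1 := congrArg (fun l => l[1]?) h
        simp only [show m+3 = (m+1)+2 from rfl, getElem1_range_map] at h1
        rw [show gA m 1 = (m+1, 1) from if_pos (by omega)] at h1
        simp [fA] at h1
      have hA := hHor (m+1) 0 (m+1) (by omega) hmL (by omega) hmL
        ((List.range (m+3)).map (gA m)) ispathA headA lastA neA
      have wbadA : pathWeight wH ((List.range (m+3)).map (gA m)) =
          (∑ j ∈ Finset.range (m+1), wH (m+1, j) (m+1, j+1)) + wH (m+1,m+1) (m, m+1) := by
        rw [show m+3 = (m+2)+1 from rfl, pathWeight_range, Finset.sum_range_succ]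
        congr 1
        · refine Finset.sum_congr rfl (fun t ht => ?_)
          rw [Finset.mem_range] at ht
          rw [show gA m t = (m+1, t) from if_pos (by omega),
              show gA m (t+1) = (m+1, t+1) from if_pos (by omega)]
        · rw [show gA m (m+1) = (m+1, m+1) from if_pos (by omega),
              show gA m (m+2) = (m, m+1) from if_neg (by omega)]
      have wgoodA : pathWeight wH (horPath (m+1) 0 (m+1)) =
          wH (m+1,0) (m,0) + ((∑ j ∈ Finset.range m, wH (m, j) (m, j+1)) + wH (m,m) (m,m+1)) := by
        rw [horPath_eq_s15, show m+3 = (m+2)+1 from rfl, pathWeight_range,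
            Finset.sum_range_succ', Finset.sum_range_succ]
        simp only [fA]
        ring
      -- inequality (B): right step then column m+1, vs vertPath m m 0
      have ispathB : IsPath (gridE L) ((List.range (m+2)).map (gB m)) := by
        rw [show m+2 = (m+1)+1 from rfl]
        apply isPath_range
        intro t ht
        rcases t with _ | s
        · show gridE L (m, m) (m - 0, m + 1)
          exact Or.inl ⟨rfl, rfl, by omega, hmL⟩
        · show gridE L (m - s, m + 1) (m - (s+1), m + 1)
          exact Or.inr ⟨by omega, rfl, by omega, hmL⟩
      have headB : ((List.range (m+2)).map (gB m)).head? = some ((m, m) : ℕ × ℕ) := by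
        rw [show m+2 = (m+1)+1 from rfl, head?_range_map]
        rfl
      have lastB : ((List.range (m+2)).map (gB m)).getLast? = some ((0, m+1) : ℕ × ℕ) := by
        rw [show m+2 = (m+1)+1 from rfl, getLast?_range_map]
        simp [gB]
      have neB : (List.range (m+2)).map (gB m) ≠ vertPath m m 0 := by
        rw [vertPath_eq]
        intro h
        have h1 := congrArg (fun l => l[1]?) h
        simp only [getElem1_range_map] at h1
        rw [show fB m 1 = (m-1, m) from if_pos hm] at h1
        simp [gB] at h1
      have hB := hVert m m 0 hm (by omega) hmL
        ((List.range (m+2)).map (gB m)) ispathB headB lastB neB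
      have wbadB : pathWeight wH ((List.range (m+2)).map (gB m)) =
          wH (m,m) (m,m+1) + ∑ i ∈ Finset.range m, wH (i+1, m+1) (i, m+1) := by
        rw [show m+2 = (m+1)+1 from rfl, pathWeight_range, Finset.sum_range_succ']
        have h1 : ∑ t ∈ Finset.range m, wH (gB m (t+1)) (gB m (t+1+1))
            = ∑ i ∈ Finset.range m, wH (i+1, m+1) (i, m+1) := by
          rw [← Finset.sum_range_reflect]
          refine Finset.sum_congr rfl (fun t ht => ?_)
          rw [Finset.mem_range] at ht
          show wH (m - (m-1-t), m+1) (m - ((m-1-t)+1), m+1) = wH (t+1, m+1) (t, m+1)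
          rw [show m - (m-1-t) = t+1 from by omega, show m - ((m-1-t)+1) = t from by omega]
        rw [h1, show (gB m 0) = (m, m) from rfl, show (gB m (0+1)) = (m, m+1) from rfl]
        ring
      have wgoodB : pathWeight wH (vertPath m m 0) =
          (∑ i ∈ Finset.range m, wH (i+1, m) (i, m)) + wH (0,m) (0,m+1) := by
        rw [vertPath_eq, show m+2 = (m+1)+1 from rfl, pathWeight_range, Finset.sum_range_succ]
        congr 1
        · rw [← Finset.sum_range_reflect]
          refine Finset.sum_congr rfl (fun t ht => ?_)
          rw [Finset.mem_range] at ht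
          rw [show fB m (m-1-t) = (m - (m-1-t), m) from if_pos (by omega),
              show fB m ((m-1-t)+1) = (m - ((m-1-t)+1), m) from if_pos (by omega),
              show m - (m-1-t) = t+1 from by omega,
              show m - ((m-1-t)+1) = t from by omega]
        · rw [show fB m m = (m - m, m) from if_pos le_rfl,
              show fB m (m+1) = (0, m+1) from if_neg (by omega), Nat.sub_self]
      rw [wbadA, wgoodA] at hA
      rw [wbadB, wgoodB] at hB
      have hCol : (∑ i ∈ Finset.range (m+1), wH (i+1, m+1) (i, m+1))
          = (∑ i ∈ Finset.range m, wH (i+1, m+1) (i, m+1)) + wH (m+1, m+1) (m, m+1) :=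
        Finset.sum_range_succ _ m
      have t1 : αH * 1 ≤ αH * wH (m+1,0) (m,0) :=
        mul_le_mul_of_nonneg_left (hmin _ _ (Or.inr ⟨rfl, rfl, hmL, by omega⟩)) hα0.le
      have t2 : αH * 1 ≤ αH * wH (0,m) (0,m+1) :=
        mul_le_mul_of_nonneg_left (hmin _ _ (Or.inl ⟨rfl, rfl, by omega, hmL⟩)) hα0.le
      have hhc : (1:ℝ) ≤ wH (m,m) (m,m+1) := hmin _ _ (Or.inl ⟨rfl, rfl, by omega, hmL⟩)
      have t3 : (1:ℝ) * wH (m,m) (m,m+1) ≤ αH * wH (m,m) (m,m+1) :=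
        mul_le_mul_of_nonneg_right hαH.le (by linarith)
      have t4 : αH * αH^m ≤ αH * ((∑ j ∈ Finset.range m, wH (m, j) (m, j+1))
          + (∑ i ∈ Finset.range m, wH (i+1, m) (i, m))) :=
        mul_le_mul_of_nonneg_left IH hα0.le
      have e4 : αH ^ (m+1) = αH * αH ^ m := by ring
      linarith [hA, hB, t1, t2, t3, t4, e4, hCol]
end
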